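/- arXiv:1203.4900 — 6 statements merged into one kernel-verified Lean document; each statement's English description precedes it below -/
import Mathlib

section
/- Let G = (V, E) be an undirected graph on n vertices and let k ≥ 1. Then the number of k-weak edges of G is at most k(n − 1). -/
open Finset

variable {V : Type} [Fintype V] [DecidableEq V]

/-- The value of the cut determined by `T` in the subgraph of `G` induced by the
vertex set `U`: the number of edges of `G` with one endpoint in `T` and the
other in `U \ T`. -/
def cutValOn (G : SimpleGraph V) [DecidableRel G.Adj] (U T : Finset V) : ℕ :=
  ∑ u ∈ T, ∑ v ∈ U \ T, if G.Adj u v then 1 else 0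

/-- The vertex-induced subgraph of `G` on `U` is `k`-connected: every cut of it
has value at least `k`. -/
def KConnOn (G : SimpleGraph V) [DecidableRel G.Adj] (k : ℕ) (U : Finset V) : Prop :=
  ∀ T : Finset V, T ⊆ U → T.Nonempty → T ≠ U → k ≤ cutValOn G U T

/-- The strong connectivity of an edge `e`: the largest `k` such that some
`k`-connected vertex-induced subgraph of `G` contains (both endpoints of) `e`. -/
noncomputable def strongConn (G : SimpleGraph V) [DecidableRel G.Adj] (e : Sym2 V) : ℕ :=
  sSup {k | ∃ U : Finset V, (∀ x ∈ e, x ∈ U) ∧ KConnOn G k U}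

/-!
Call an edge of `G[U]` weak in `U` if no `k`-connected `W ⊆ U` contains it. If `U` is itself
`k`-connected there are no such edges. Otherwise some cut `(T, U \ T)` of `G[U]` has fewer than
`k` edges, and each weak edge of `U` either crosses that cut or is weak in `T` or in `U \ T`.
Induction on `|U|` gives at most `k (|T| - 1) + k (|U \ T| - 1) + (k - 1) ≤ k (|U| - 1)`
weak edges, and every `k`-weak edge of `G` is weak in `V`.
-/

open scoped Classical in
noncomputable def weakEdgesIn (G : SimpleGraph V) [DecidableRel G.Adj] (k : ℕ) (U : Finset V) :
    Finset (Sym2 V) :=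
  G.edgeFinset.filter fun e =>
    (∀ x ∈ e, x ∈ U) ∧ ∀ W ⊆ U, (∀ x ∈ e, x ∈ W) → ¬ KConnOn G k W

def crossingEdges (G : SimpleGraph V) [DecidableRel G.Adj] (U T : Finset V) : Finset (Sym2 V) :=
  ((T ×ˢ (U \ T)).filter fun p => G.Adj p.1 p.2).image fun p => s(p.1, p.2)

omit [Fintype V] in
lemma card_crossingEdges_le_cutValOn (G : SimpleGraph V) [DecidableRel G.Adj] (U T : Finset V) :
    #(crossingEdges G U T) ≤ cutValOn G U T := by
  have hcut : cutValOn G U T = #((T ×ˢ (U \ T)).filter fun p => G.Adj p.1 p.2) := by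
    rw [card_filter, sum_product]
    rfl
  exact hcut ▸ card_image_le

lemma weakEdgesIn_eq_empty (G : SimpleGraph V) [DecidableRel G.Adj] {k : ℕ} {U : Finset V}
    (hU : KConnOn G k U) : weakEdgesIn G k U = ∅ := by
  classical
  exact filter_eq_empty_iff.mpr fun _ _ ⟨heU, hweak⟩ => hweak U Subset.rfl heU hU

lemma weakEdgesIn_subset_union (G : SimpleGraph V) [DecidableRel G.Adj] (k : ℕ)
    {U T : Finset V} (hTU : T ⊆ U) :
    weakEdgesIn G k U ⊆
      weakEdgesIn G k T ∪ weakEdgesIn G k (U \ T) ∪ crossingEdges G U T := by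
  intro e he
  induction e using Sym2.inductionOn with
  | hf a b =>
  simp only [weakEdgesIn, mem_filter, Sym2.mem_iff, forall_eq_or_imp, forall_eq] at he
  obtain ⟨hab, ⟨haU, hbU⟩, hweak⟩ := he
  have hadj : G.Adj a b := SimpleGraph.mem_edgeFinset.mp hab
  simp only [weakEdgesIn, crossingEdges, mem_union, mem_filter, mem_image, mem_product,
    mem_sdiff, Sym2.mem_iff, forall_eq_or_imp, forall_eq, Prod.exists, Sym2.eq_iff]
  by_cases haT : a ∈ T <;> by_cases hbT : b ∈ T
  · exact .inl <| .inl ⟨hab, ⟨haT, hbT⟩, fun W hW => hweak W (hW.trans hTU)⟩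
  · exact .inr ⟨a, b, ⟨⟨haT, hbU, hbT⟩, hadj⟩, .inl ⟨rfl, rfl⟩⟩
  · exact .inr ⟨b, a, ⟨⟨hbT, haU, haT⟩, hadj.symm⟩, .inr ⟨rfl, rfl⟩⟩
  · exact .inl <| .inr
      ⟨hab, ⟨⟨haU, haT⟩, hbU, hbT⟩, fun W hW => hweak W (hW.trans sdiff_subset)⟩

theorem card_weakEdgesIn_le (G : SimpleGraph V) [DecidableRel G.Adj] (k : ℕ) (U : Finset V) :
    #(weakEdgesIn G k U) ≤ k * (#U - 1) := by
  induction U using Finset.strongInduction with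
  | H U ih =>
  by_cases hU : KConnOn G k U
  · simp [weakEdgesIn_eq_empty G hU]
  obtain ⟨T, hTU, hT, hTne, hcut⟩ :
      ∃ T ⊆ U, T.Nonempty ∧ T ≠ U ∧ cutValOn G U T < k := by
    simpa [KConnOn] using hU
  have hTss : T ⊂ U := Finset.ssubset_iff_subset_ne.mpr ⟨hTU, hTne⟩
  have hT' : (U \ T).Nonempty := sdiff_nonempty.mpr fun h => hTne (hTU.antisymm h)
  have hcard : #(U \ T) + #T = #U := card_sdiff_add_card_eq_card hTU
  calc #(weakEdgesIn G k U)
      ≤ #(weakEdgesIn G k T) + #(weakEdgesIn G k (U \ T)) + #(crossingEdges G U T) :=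
        (card_le_card (weakEdgesIn_subset_union G k hTU)).trans <|
          (card_union_le _ _).trans (Nat.add_le_add_right (card_union_le _ _) _)
    _ ≤ k * (#T - 1) + k * (#(U \ T) - 1) + (k - 1) := by
        gcongr
        · exact ih T hTss
        · exact ih _ (sdiff_ssubset hTU hT)
        · have := card_crossingEdges_le_cutValOn G U T
          omega
    _ ≤ k * (#U - 1) := by
        obtain ⟨t, ht⟩ := Nat.exists_eq_add_one_of_ne_zero hT.card_pos.ne'
        obtain ⟨s, hs⟩ := Nat.exists_eq_add_one_of_ne_zero hT'.card_pos.ne'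
        rw [← hcard, ht, hs, show s + 1 + (t + 1) - 1 = s + t + 1 by omega]
        simp only [Nat.add_sub_cancel, mul_add, mul_one]
        omega

omit [Fintype V] in
lemma KConnOn.le_card_sub_one {G : SimpleGraph V} [DecidableRel G.Adj] {k : ℕ} {W : Finset V}
    (hW : KConnOn G k W) {a : V} (ha : a ∈ W) (hne : W ≠ {a}) : k ≤ #W - 1 :=
  calc k ≤ cutValOn G W {a} :=
        hW {a} (singleton_subset_iff.mpr ha) (singleton_nonempty a) (Ne.symm hne)
    _ = #((W \ {a}).filter (G.Adj a)) := by
        simp only [cutValOn, sum_singleton, sum_boole, Nat.cast_id]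
    _ ≤ #(W \ {a}) := card_filter_le _ _
    _ = #W - 1 := by rw [card_sdiff_of_subset (singleton_subset_iff.mpr ha), card_singleton]

lemma le_strongConn {G : SimpleGraph V} [DecidableRel G.Adj] {k : ℕ} {W : Finset V}
    {e : Sym2 V} (he : ¬ e.IsDiag) (heW : ∀ x ∈ e, x ∈ W) (hW : KConnOn G k W) :
    k ≤ strongConn G e := by
  induction e using Sym2.inductionOn with
  | hf a b =>
  have hab : a ≠ b := by simpa using he
  -- An unbounded `sSup` in `ℕ` is `0` (a loop lies in the `k`-connected `{a}` for every `k`),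
  -- so a bound on the connectivity of the sets containing `e` is essential.
  refine le_csSup ⟨Fintype.card V, ?_⟩ ⟨W, heW, hW⟩
  rintro j ⟨U, hU, hj⟩
  have haU := hU a (Sym2.mem_mk_left a b)
  have hne : U ≠ {a} := fun h => hab (mem_singleton.mp (h ▸ hU b (Sym2.mem_mk_right a b))).symm
  exact (hj.le_card_sub_one haU hne).trans (Nat.sub_le _ _ |>.trans (card_le_univ U))

open scoped Classical in
theorem stmt0_general (V : Type) [Fintype V] [DecidableEq V] (G : SimpleGraph V)
    [DecidableRel G.Adj] (k : ℕ) :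
    (G.edgeFinset.filter (fun e => strongConn G e < k)).card ≤ k * (Fintype.card V - 1) := by
  have hweak : G.edgeFinset.filter (fun e => strongConn G e < k) ⊆ weakEdgesIn G k univ := by
    intro e he
    obtain ⟨hedge, hlt⟩ := mem_filter.mp he
    refine mem_filter.mpr ⟨hedge, fun x _ => mem_univ x, fun W _ heW hW => ?_⟩
    have hdiag := G.not_isDiag_of_mem_edgeSet (G.mem_edgeFinset.mp hedge)
    exact (le_strongConn hdiag heW hW).not_gt hlt
  calc _ ≤ #(weakEdgesIn G k univ) := card_le_card hweak
    _ ≤ k * (Fintype.card V - 1) := card_univ (α := V) ▸ card_weakEdgesIn_le G k univ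

open scoped Classical in
/-- The number of `k`-weak edges (edges of strong connectivity `< k`) of a graph
on `n` vertices is at most `k * (n - 1)`. -/
theorem stmt0 (V : Type) [Fintype V] [DecidableEq V] (G : SimpleGraph V)
    [DecidableRel G.Adj] (k : ℕ) (hk : 1 ≤ k) :
    (G.edgeFinset.filter (fun e => strongConn G e < k)).card ≤ k * (Fintype.card V - 1) :=
  stmt0_general V G k
end

section
/- Let G = (V, E) be an undirected graph on n vertices. Then the sum over all edges e ∈ E of 1/s_e is at most n − 1, where s_e denotes the strong connectivity of e. -/
/-!
Induct on the vertex set `U` of an induced subgraph. If `U` has at least two vertices, take a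
minimum cut `(T, U \ T)` of `G[U]`, of value `c`. Then `G[U]` is `c`-connected, so each of the at
most `c` crossing edges has `s_e ≥ c` and together they contribute at most `1`; the edges inside
`T` and inside `U \ T` contribute at most `|T| - 1` and `|U \ T| - 1` by induction.
-/

open Finset

variable {V : Type} [Fintype V] [DecidableEq V]

namespace SimpleGraph

section Cuts

omit [Fintype V]

variable {G : SimpleGraph V} [DecidableRel G.Adj]

lemma cutValOn_eq_card (U T : Finset V) :
    cutValOn G U T = #{p ∈ T ×ˢ (U \ T) | G.Adj p.1 p.2} := by
  rw [card_filter, sum_product]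
  rfl

lemma cutValOn_le_card_mul (U T : Finset V) : cutValOn G U T ≤ #T * #(U \ T) := by
  rw [cutValOn_eq_card, ← card_product]
  exact card_filter_le _ _

lemma exists_kConnOn_cutValOn {U : Finset V} (hU : U.Nontrivial) :
    ∃ T ⊂ U, T.Nonempty ∧ KConnOn G (cutValOn G U T) U := by
  obtain ⟨a, ha, b, hb, hab⟩ := hU
  have hproper : {a} ∈ {T ∈ U.ssubsets | T.Nonempty} := by
    refine mem_filter.mpr ⟨mem_ssubsets.mpr ?_, singleton_nonempty a⟩
    exact Finset.ssubset_iff_subset_ne.mpr ⟨singleton_subset_iff.mpr ha,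
      fun h => hab (mem_singleton.mp (h ▸ hb)).symm⟩
  obtain ⟨T, hT, hmin⟩ := exists_min_image _ (cutValOn G U) ⟨_, hproper⟩
  obtain ⟨hTU, hTne⟩ := mem_filter.mp hT
  refine ⟨T, mem_ssubsets.mp hTU, hTne, fun T' hT'U hT'ne hT'U' => hmin T' ?_⟩
  exact mem_filter.mpr
    ⟨mem_ssubsets.mpr (Finset.ssubset_iff_subset_ne.mpr ⟨hT'U, hT'U'⟩), hT'ne⟩

end Cuts

variable (G : SimpleGraph V) [DecidableRel G.Adj]

def edgesWithin (U : Finset V) : Finset (Sym2 V) :=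
  {e ∈ G.edgeFinset | ∀ x ∈ e, x ∈ U}

variable {G}

lemma mem_edgesWithin {U : Finset V} {e : Sym2 V} :
    e ∈ G.edgesWithin U ↔ e ∈ G.edgeSet ∧ ∀ x ∈ e, x ∈ U := by
  rw [edgesWithin, mem_filter, mem_edgeFinset]

lemma edgesWithin_singleton (a : V) : G.edgesWithin {a} = ∅ := by
  refine eq_empty_of_forall_notMem fun e he => ?_
  induction e with
  | _ x y =>
    obtain ⟨hxy, hU⟩ := mem_edgesWithin.mp he
    have hx : x = a := mem_singleton.mp (hU x (Sym2.mem_mk_left x y))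
    have hy : y = a := mem_singleton.mp (hU y (Sym2.mem_mk_right x y))
    exact hxy.ne (hx.trans hy.symm)

lemma edgesWithin_univ : G.edgesWithin univ = G.edgeFinset :=
  filter_true_of_mem fun _ _ x _ => mem_univ x

lemma edgesWithin_mono {T U : Finset V} (hTU : T ⊆ U) : G.edgesWithin T ⊆ G.edgesWithin U :=
  fun _ he => mem_edgesWithin.mpr
    ⟨(mem_edgesWithin.mp he).1, fun x hx => hTU ((mem_edgesWithin.mp he).2 x hx)⟩

lemma disjoint_edgesWithin_sdiff (U T : Finset V) :
    Disjoint (G.edgesWithin T) (G.edgesWithin (U \ T)) := by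
  refine Finset.disjoint_left.mpr fun e heT heUT => ?_
  induction e with
  | _ x y =>
    have hxT : x ∈ T := (mem_edgesWithin.mp heT).2 x (Sym2.mem_mk_left x y)
    exact (mem_sdiff.mp ((mem_edgesWithin.mp heUT).2 x (Sym2.mem_mk_left x y))).2 hxT

lemma card_crossing_le_cutValOn (U T : Finset V) :
    #(G.edgesWithin U \ (G.edgesWithin T ∪ G.edgesWithin (U \ T))) ≤ cutValOn G U T := by
  rw [cutValOn_eq_card]
  refine card_le_card_of_surjOn (fun p => s(p.1, p.2)) fun e he => ?_
  induction e with
  | _ a b =>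
    simp only [coe_sdiff, coe_union, Set.mem_sdiff, Set.mem_union, mem_coe, mem_edgesWithin,
      Sym2.mem_iff, forall_eq_or_imp, forall_eq, mem_sdiff, mem_edgeSet] at he
    obtain ⟨⟨hab, ha, hb⟩, hcross⟩ := he
    by_cases haT : a ∈ T
    · have hbT : b ∉ T := fun hbT => hcross (Or.inl ⟨hab, haT, hbT⟩)
      exact ⟨(a, b), by simp [haT, hb, hbT, hab], rfl⟩
    · have hbT : b ∈ T := by_contra fun hbT => hcross (Or.inr ⟨hab, ⟨ha, haT⟩, hb, hbT⟩)
      exact ⟨(b, a), by simp [haT, ha, hbT, hab.symm], Sym2.eq_swap⟩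

lemma sum_edgesWithin_eq_crossing_add {M : Type*} [AddCommMonoid M] (f : Sym2 V → M)
    {U T : Finset V} (hTU : T ⊆ U) :
    ∑ e ∈ G.edgesWithin U, f e =
      ∑ e ∈ G.edgesWithin U \ (G.edgesWithin T ∪ G.edgesWithin (U \ T)), f e
        + (∑ e ∈ G.edgesWithin T, f e + ∑ e ∈ G.edgesWithin (U \ T), f e) := by
  rw [← sum_union (disjoint_edgesWithin_sdiff U T), sum_sdiff]
  exact union_subset (edgesWithin_mono hTU) (edgesWithin_mono sdiff_subset)

lemma bddAbove_kConnOn {e : Sym2 V} (he : ¬ e.IsDiag) :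
    BddAbove {k | ∃ U : Finset V, (∀ x ∈ e, x ∈ U) ∧ KConnOn G k U} := by
  refine ⟨Fintype.card V, ?_⟩
  rintro k ⟨U, heU, hK⟩
  induction e with
  | _ a b =>
    have hab : a ≠ b := he
    have hb : b ∈ U \ {a} :=
      mem_sdiff.mpr ⟨heU b (Sym2.mem_mk_right a b), by simpa using hab.symm⟩
    have hproper : ({a} : Finset V) ≠ U :=
      fun h => (mem_sdiff.mp hb).2 (h ▸ (mem_sdiff.mp hb).1)
    calc k ≤ cutValOn G U {a} :=
          hK {a} (singleton_subset_iff.mpr (heU a (Sym2.mem_mk_left a b)))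
            (singleton_nonempty a) hproper
      _ ≤ #{a} * #(U \ {a}) := cutValOn_le_card_mul U {a}
      _ ≤ Fintype.card V := by rw [card_singleton, one_mul]; exact card_le_univ _

lemma le_strongConn {e : Sym2 V} (he : e ∈ G.edgeSet) {c : ℕ} {U : Finset V}
    (heU : ∀ x ∈ e, x ∈ U) (hK : KConnOn G c U) : c ≤ strongConn G e :=
  le_csSup (bddAbove_kConnOn (G.not_isDiag_of_mem_edgeSet he)) ⟨U, heU, hK⟩

lemma sum_crossing_inv_strongConn_le_one {U T : Finset V}
    (hK : KConnOn G (cutValOn G U T) U) :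
    ∑ e ∈ G.edgesWithin U \ (G.edgesWithin T ∪ G.edgesWithin (U \ T)),
      (1 : ℝ) / strongConn G e ≤ 1 := by
  set C := G.edgesWithin U \ (G.edgesWithin T ∪ G.edgesWithin (U \ T))
  set c := cutValOn G U T
  have hC : #C ≤ c := card_crossing_le_cutValOn U T
  obtain hc | hc := Nat.eq_zero_or_pos c
  · rw [card_eq_zero.mp (by omega : #C = 0), sum_empty]
    exact zero_le_one
  have hcR : (0 : ℝ) < c := Nat.cast_pos.mpr hc
  have hterm : ∀ e ∈ C, (1 : ℝ) / strongConn G e ≤ 1 / c := fun e he => by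
    have heU := mem_edgesWithin.mp (mem_sdiff.mp he).1
    exact one_div_le_one_div_of_le hcR (Nat.cast_le.mpr (le_strongConn heU.1 heU.2 hK))
  calc ∑ e ∈ C, (1 : ℝ) / strongConn G e ≤ #C • (1 / (c : ℝ)) :=
        sum_le_card_nsmul _ _ _ hterm
    _ ≤ c * (1 / (c : ℝ)) := by
        rw [nsmul_eq_mul]
        gcongr
    _ = 1 := mul_one_div_cancel hcR.ne'

theorem sum_edgesWithin_inv_strongConn_le {U : Finset V} (hU : U.Nonempty) :
    ∑ e ∈ G.edgesWithin U, (1 : ℝ) / strongConn G e ≤ #U - 1 := by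
  induction U using Finset.strongInduction with
  | H U ih =>
    obtain ⟨a, rfl⟩ | hU := hU.exists_eq_singleton_or_nontrivial
    · simp [edgesWithin_singleton]
    obtain ⟨T, hTU, hT, hK⟩ := exists_kConnOn_cutValOn (G := G) hU
    have hUT : (U \ T).Nonempty := sdiff_nonempty.mpr hTU.2
    have hcard : (#(U \ T) : ℝ) = #U - #T := by
      rw [card_sdiff_of_subset hTU.1, Nat.cast_sub (card_le_card hTU.1)]
    rw [sum_edgesWithin_eq_crossing_add _ hTU.1]
    have hcross := sum_crossing_inv_strongConn_le_one hK
    have hinside := ih T hTU hT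
    have houtside := ih (U \ T) (sdiff_ssubset hTU.1 hT) hUT
    linarith

end SimpleGraph

/-- For a graph `G` on `n ≥ 1` vertices, `∑_{e ∈ E} 1 / s_e ≤ n - 1`, where `s_e`
is the strong connectivity of `e`. -/
theorem stmt1 (V : Type) [Fintype V] [DecidableEq V] [Nonempty V] (G : SimpleGraph V)
    [DecidableRel G.Adj] :
    ∑ e ∈ G.edgeFinset, (1 : ℝ) / (strongConn G e : ℝ) ≤ (Fintype.card V : ℝ) - 1 := by
  simpa [SimpleGraph.edgesWithin_univ] using
    G.sum_edgesWithin_inv_strongConn_le (univ_nonempty (α := V))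
end

section
/- For every d ≥ 1 there exists a constant c = c(d) > 0 with the following property. Let G = (V, E) be a k-connected unweighted graph on n ≥ 2 vertices, let ε ∈ (0, 1), and set p = min(1, c · log n / (ε² k)). Let G' be the random weighted graph obtained by including each edge of G independently with probability p, giving each included edge weight 1/p. Then G' is an ε-sparsification of G with probability at least 1 − n^{−d}. -/
/-!
A cut of value `m` is sampled correctly up to a factor `1 ± ε` except with probability
`2 exp (-ε² p m / 4)` (multiplicative Chernoff bound), which for `p = c log n / (ε² k)` is
`2 n ^ (-(c / 4) m / k)`. A union bound over all cuts converges because cuts are few: in a graph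
with minimum cut `k`, at most `2 ^ b (n choose b) ≤ n ^ (2 b)` cuts have value at most `b k / 2`
(Karger). That count goes by induction on `n`: a light cut that does not separate the ends of an
edge survives the contraction of that edge, and double counting the weight of the edges not
crossing each light cut turns this into `N (M - b k) ≤ 2 ^ b (n - 1 choose b) M`, where
`M ≥ n k` is twice the total weight.
-/

open Finset MeasureTheory ProbabilityTheory

variable {V : Type} [Fintype V] [DecidableEq V]

/-- The value of the cut determined by `S` for an edge-weight function `w`
(summing `w u v` over ordered pairs with `u ∈ S`, `v ∉ S`, so that each
unordered cross pair is counted once). -/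
def cutVal (w : V → V → ℝ) (S : Finset V) : ℝ := ∑ u ∈ S, ∑ v ∈ Sᶜ, w u v

/-- The value of the cut determined by `S` in an unweighted graph `G`. -/
def cutValN (G : SimpleGraph V) [DecidableRel G.Adj] (S : Finset V) : ℕ :=
  ∑ u ∈ S, ∑ v ∈ Sᶜ, if G.Adj u v then 1 else 0

/-- The weight function of an unweighted graph. -/
def gWeight (G : SimpleGraph V) [DecidableRel G.Adj] : V → V → ℝ :=
  fun u v => if G.Adj u v then 1 else 0

/-- `w'` is an `ε`-sparsification of `w`: every cut value of `w'` is within a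
factor `(1 ± ε)` of the corresponding cut value of `w`. -/
def IsSparsification (ε : ℝ) (w w' : V → V → ℝ) : Prop :=
  ∀ S : Finset V, S.Nonempty → S ≠ Finset.univ →
    (1 - ε) * cutVal w S ≤ cutVal w' S ∧ cutVal w' S ≤ (1 + ε) * cutVal w S

namespace CutCounting

variable {W : Type*} [DecidableEq W]

def cutWeight (w : W → W → ℕ) (A S : Finset W) : ℕ := ∑ u ∈ S, ∑ v ∈ A \ S, w u v

def properCuts (A : Finset W) : Finset (Finset W) := A.ssubsets.filter Finset.Nonempty

def lightCuts (w : W → W → ℕ) (A : Finset W) (b k : ℕ) : Finset (Finset W) :=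
  (properCuts A).filter fun S => 2 * cutWeight w A S ≤ b * k

/-- Contraction of `y` into `x`: the edges at `y` are moved to `x`, loops are dropped and `y`
is left isolated. -/
def contract (w : W → W → ℕ) (x y : W) : W → W → ℕ := fun u v =>
  if u = v ∨ u = y ∨ v = y then 0
  else w u v + (if u = x then w y v else 0) + (if v = x then w u y else 0)

/-- For `y ∉ S`, the preimage of `S` under the contraction map sending `y` to `x`. -/
def uncontract (x y : W) (S : Finset W) : Finset W := if x ∈ S then insert y S else S

variable {w : W → W → ℕ} {A S : Finset W} {x y : W} {b k : ℕ}

lemma mem_properCuts : S ∈ properCuts A ↔ S ⊂ A ∧ S.Nonempty := by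
  rw [properCuts, mem_filter, mem_ssubsets]

lemma contract_symm (hw : ∀ u v, w u v = w v u) (u v : W) :
    contract w x y u v = contract w x y v u := by
  unfold contract
  by_cases h : u = v ∨ u = y ∨ v = y
  · have h' : v = u ∨ v = y ∨ u = y := by tauto
    rw [if_pos h, if_pos h']
  · have h' : ¬(v = u ∨ v = y ∨ u = y) := by tauto
    rw [if_neg h, if_neg h', hw u v, hw y v, hw u y]
    ring

lemma contract_self (u : W) : contract w x y u u = 0 := by simp [contract]

lemma cutWeight_contract (hyA : y ∉ A) (hyS : y ∉ S) :
    cutWeight (contract w x y) A S = cutWeight w A S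
      + (if x ∈ S then ∑ v ∈ A \ S, w y v else 0)
      + (if x ∈ A \ S then ∑ u ∈ S, w u y else 0) := by
  have hterm : ∀ u ∈ S, ∀ v ∈ A \ S, contract w x y u v
      = w u v + (if u = x then w y v else 0) + (if v = x then w u y else 0) := by
    intro u hu v hv
    have huv : u ≠ v := fun h => (mem_sdiff.1 hv).2 (h ▸ hu)
    have hu : u ≠ y := fun h => hyS (h ▸ hu)
    have hv : v ≠ y := fun h => hyA (h ▸ (mem_sdiff.1 hv).1)
    simp [contract, huv, hu, hv]
  rw [cutWeight, sum_congr rfl fun u hu => sum_congr rfl (hterm u hu)]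
  simp only [sum_add_distrib, cutWeight, sum_ite_irrel, sum_const_zero, sum_ite_eq']

lemma cutWeight_contract_erase (hxy : x ≠ y) (hx : x ∈ A) (hy : y ∈ A)
    (hS : x ∈ S ↔ y ∈ S) :
    cutWeight (contract w x y) (A.erase y) (S.erase y) = cutWeight w A S := by
  rw [cutWeight_contract (A.notMem_erase y) (S.notMem_erase y)]
  by_cases hyS : y ∈ S
  · have hxS := hS.2 hyS
    have hdiff : A.erase y \ S.erase y = A \ S := by
      ext z; by_cases z = y <;> aesop
    rw [hdiff, if_pos (mem_erase.2 ⟨hxy, hxS⟩), if_neg (by simp [hxS]), cutWeight, cutWeight,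
      hdiff, add_zero, sum_erase_add _ _ hyS]
  · have hxS : x ∉ S := fun h => hyS (hS.1 h)
    rw [cutWeight, cutWeight, erase_eq_of_notMem hyS, erase_sdiff_comm, if_neg hxS,
      if_pos (mem_erase.2 ⟨hxy, mem_sdiff.2 ⟨hx, hxS⟩⟩), add_zero, ← sum_add_distrib]
    exact sum_congr rfl fun u _ => sum_erase_add _ _ (mem_sdiff.2 ⟨hy, hyS⟩)

lemma uncontract_erase (hxy : x ≠ y) (hS : x ∈ S ↔ y ∈ S) :
    uncontract x y (S.erase y) = S := by
  by_cases hyS : y ∈ S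
  · rw [uncontract, if_pos (mem_erase.2 ⟨hxy, hS.2 hyS⟩), insert_erase hyS]
  · rw [uncontract, erase_eq_of_notMem hyS, if_neg fun h => hyS (hS.1 h)]

lemma erase_uncontract (hyS : y ∉ S) : (uncontract x y S).erase y = S := by
  unfold uncontract; split_ifs
  exacts [erase_insert hyS, erase_eq_of_notMem hyS]

lemma mem_uncontract_iff (hyS : y ∉ S) : x ∈ uncontract x y S ↔ y ∈ uncontract x y S := by
  unfold uncontract; split_ifs with hxS <;> simp [hxS, hyS]

lemma subset_uncontract : S ⊆ uncontract x y S := by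
  unfold uncontract; split_ifs
  exacts [subset_insert y S, subset_refl S]

lemma uncontract_ssubset (hy : y ∈ A) (hS : S ⊂ A.erase y) :
    uncontract x y S ⊂ A := by
  have hyS : y ∉ S := fun h => A.notMem_erase y (hS.subset h)
  have hsub : uncontract x y S ⊆ A := by
    unfold uncontract; split_ifs
    exacts [insert_subset hy (hS.subset.trans (erase_subset y A)),
      hS.subset.trans (erase_subset y A)]
  refine ssubset_of_subset_of_ne hsub fun h => hS.ne ?_
  rw [← erase_uncontract (x := x) hyS, h]

lemma le_cutWeight_contract (hxy : x ≠ y) (hx : x ∈ A) (hy : y ∈ A)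
    (hmin : ∀ S ⊂ A, S.Nonempty → k ≤ cutWeight w A S) :
    ∀ S ⊂ A.erase y, S.Nonempty → k ≤ cutWeight (contract w x y) (A.erase y) S := by
  intro S hS hne
  have hyS : y ∉ S := fun h => A.notMem_erase y (hS.subset h)
  rw [← erase_uncontract (x := x) hyS,
    cutWeight_contract_erase hxy hx hy (mem_uncontract_iff hyS)]
  exact hmin _ (uncontract_ssubset hy hS) (hne.mono subset_uncontract)

lemma card_filter_lightCuts_le (hxy : x ≠ y) (hx : x ∈ A) (hy : y ∈ A) :
    ((lightCuts w A b k).filter fun S => x ∈ S ↔ y ∈ S).card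
      ≤ (lightCuts (contract w x y) (A.erase y) b k).card := by
  refine (card_le_card fun S hS => ?_).trans (card_image_le (f := uncontract x y))
  simp only [lightCuts, mem_filter, mem_properCuts] at hS
  obtain ⟨⟨⟨hSA, hne⟩, hlight⟩, hxyS⟩ := hS
  have hS' := uncontract_erase hxy hxyS
  refine mem_image.2 ⟨S.erase y, ?_, hS'⟩
  simp only [lightCuts, mem_filter, mem_properCuts, cutWeight_contract_erase hxy hx hy hxyS]
  refine ⟨⟨ssubset_of_subset_of_ne (erase_subset_erase y hSA.subset) fun h => hSA.ne ?_, ?_⟩,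
    hlight⟩
  · rw [← hS', h, uncontract, if_pos (mem_erase.2 ⟨hxy, hx⟩), insert_erase hy]
  · refine nonempty_iff_ne_empty.2 fun h => hne.ne_empty ?_
    rw [← hS', h, uncontract, if_neg (notMem_empty x)]

lemma cutWeight_eq_sum_sum_ite (hS : S ⊆ A) :
    cutWeight w A S = ∑ u ∈ A, ∑ v ∈ A, if u ∈ S ∧ v ∉ S then w u v else 0 := by
  simp only [ite_and, sum_ite_irrel, sum_const_zero, ← sum_filter, filter_mem_eq_inter,
    inter_eq_right.2 hS, filter_notMem_eq_sdiff, cutWeight]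

lemma sum_sum_eq_two_mul_cutWeight_add (hw : ∀ u v, w u v = w v u) (hS : S ⊆ A) :
    ∑ u ∈ A, ∑ v ∈ A, w u v
      = 2 * cutWeight w A S
        + ∑ u ∈ A, ∑ v ∈ A, if (u ∈ S ↔ v ∈ S) then w u v else 0 := by
  have hsplit : ∀ u v, w u v = (if u ∈ S ∧ v ∉ S then w u v else 0)
      + (if v ∈ S ∧ u ∉ S then w v u else 0)
      + (if (u ∈ S ↔ v ∈ S) then w u v else 0) := by
    intro u v
    rw [hw v u]
    by_cases u ∈ S <;> by_cases v ∈ S <;> simp [*]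
  rw [sum_congr rfl fun u _ => sum_congr rfl fun v _ => hsplit u v]
  simp only [sum_add_distrib]
  rw [sum_comm (s := A) (t := A) (f := fun u v => if v ∈ S ∧ u ∉ S then w v u else 0),
    ← cutWeight_eq_sum_sum_ite hS, two_mul]

lemma card_mul_le_sum_sum (hA : 1 < A.card)
    (hmin : ∀ S ⊂ A, S.Nonempty → k ≤ cutWeight w A S) :
    A.card * k ≤ ∑ u ∈ A, ∑ v ∈ A, w u v := by
  rw [← smul_eq_mul, ← sum_const]
  refine sum_le_sum fun z hz => ?_
  have hzA : {z} ⊂ A := ssubset_of_subset_of_ne (singleton_subset_iff.2 hz) fun h => by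
    rw [← h, card_singleton] at hA; exact hA.false
  calc k ≤ cutWeight w A {z} := hmin {z} hzA (singleton_nonempty z)
    _ = ∑ v ∈ A \ {z}, w z v := sum_singleton _ _
    _ ≤ ∑ v ∈ A, w z v := sum_le_sum_of_subset sdiff_subset

lemma card_lightCuts_mul_sum_sum_le (hw : ∀ u v, w u v = w v u) (hloop : ∀ u, w u u = 0)
    {f : ℕ} (hf : ∀ u ∈ A, ∀ v ∈ A, u ≠ v →
      ((lightCuts w A b k).filter fun S => u ∈ S ↔ v ∈ S).card ≤ f) :
    (lightCuts w A b k).card * ∑ u ∈ A, ∑ v ∈ A, w u v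
      ≤ (lightCuts w A b k).card * (b * k) + f * ∑ u ∈ A, ∑ v ∈ A, w u v := by
  set L := lightCuts w A b k
  have hsame : ∀ S ∈ L, ∑ u ∈ A, ∑ v ∈ A, w u v
      ≤ b * k + ∑ u ∈ A, ∑ v ∈ A, if (u ∈ S ↔ v ∈ S) then w u v else 0 := by
    intro S hS
    simp only [L, lightCuts, mem_filter, mem_properCuts] at hS
    have := sum_sum_eq_two_mul_cutWeight_add hw hS.1.1.subset
    omega
  have hpair : ∀ u ∈ A, ∀ v ∈ A,
      (L.filter fun S => u ∈ S ↔ v ∈ S).card * w u v ≤ f * w u v := by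
    intro u hu v hv
    rcases eq_or_ne u v with rfl | huv
    · simp [hloop]
    · exact Nat.mul_le_mul_right _ (hf u hu v hv huv)
  calc L.card * ∑ u ∈ A, ∑ v ∈ A, w u v = ∑ S ∈ L, ∑ u ∈ A, ∑ v ∈ A, w u v := by
        rw [sum_const, smul_eq_mul]
    _ ≤ ∑ S ∈ L, (b * k
          + ∑ u ∈ A, ∑ v ∈ A, if (u ∈ S ↔ v ∈ S) then w u v else 0) :=
        sum_le_sum hsame
    _ = L.card * (b * k)
          + ∑ u ∈ A, ∑ v ∈ A, (L.filter fun S => u ∈ S ↔ v ∈ S).card * w u v := by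
        rw [sum_add_distrib, sum_const, smul_eq_mul, sum_comm]
        simp_rw [sum_comm (s := L), ← sum_filter, sum_const, smul_eq_mul]
    _ ≤ L.card * (b * k) + f * ∑ u ∈ A, ∑ v ∈ A, w u v := by
        simp only [mul_sum]
        exact add_le_add_right (sum_le_sum fun u hu => sum_le_sum fun v hv => hpair u hu v hv) _

lemma le_of_double_count {N M f f' q : ℕ} (hk : 0 < k) (hq : 0 < q) (hM : (b + q) * k ≤ M)
    (hN : N * M ≤ N * (b * k) + f' * M) (hf : (b + q) * f' = q * f) : N ≤ f := by
  have hbk : b * k ≤ M := le_trans (Nat.mul_le_mul_right k (Nat.le_add_right b q)) hM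
  obtain ⟨D, rfl⟩ : ∃ D, M = b * k + D := ⟨M - b * k, (Nat.add_sub_cancel' hbk).symm⟩
  have hD : q * k ≤ D := by nlinarith
  have hND : N * D ≤ f' * (b * k + D) := by nlinarith
  have key : q * (N * D) ≤ q * (f * D) :=
    calc q * (N * D) ≤ q * (f' * (b * k + D)) := Nat.mul_le_mul_left q hND
      _ = b * f' * (q * k) + q * f' * D := by ring
      _ ≤ b * f' * D + q * f' * D := by gcongr
      _ = q * (f * D) := by rw [← mul_assoc, ← hf]; ring
  exact Nat.le_of_mul_le_mul_right (Nat.le_of_mul_le_mul_left key hq)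
    (lt_of_lt_of_le (Nat.mul_pos hq hk) hD)

/-- Karger's bound; `b` is twice the ratio of the cut weight to `k`, so that the ratio may be
half-integral. -/
theorem card_lightCuts_le (hw : ∀ u v, w u v = w v u) (hloop : ∀ u, w u u = 0) (hk : 0 < k)
    (hb : 0 < b) (hbA : b ≤ A.card) (hmin : ∀ S ⊂ A, S.Nonempty → k ≤ cutWeight w A S) :
    (lightCuts w A b k).card ≤ 2 ^ b * A.card.choose b := by
  induction hA : A.card using Nat.strong_induction_on generalizing A w with
  | _ t ih =>
  rcases hbA.eq_or_lt with hbt | hbt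
  · calc (lightCuts w A b k).card ≤ A.powerset.card :=
          card_le_card ((filter_subset _ _).trans ((filter_subset _ _).trans (erase_subset _ _)))
      _ = 2 ^ b * t.choose b := by rw [card_powerset, hbt, hA, Nat.choose_self, mul_one]
  obtain ⟨q, rfl⟩ : ∃ q, t = b + (q + 1) := ⟨t - b - 1, by omega⟩
  have hM : (b + (q + 1)) * k ≤ ∑ u ∈ A, ∑ v ∈ A, w u v :=
    hA ▸ card_mul_le_sum_sum (by omega) hmin
  -- a light cut not separating `u ≠ v` is a light cut of the graph with `v` contracted into `u`
  have hpair : ∀ u ∈ A, ∀ v ∈ A, u ≠ v →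
      ((lightCuts w A b k).filter fun S => u ∈ S ↔ v ∈ S).card
        ≤ 2 ^ b * (b + q).choose b := by
    intro u hu v hv huv
    have hcard : (A.erase v).card = b + q := by rw [card_erase_of_mem hv, hA]; rfl
    exact (card_filter_lightCuts_le huv hu hv).trans <| ih (b + q) (by omega) (contract_symm hw)
      contract_self (by omega) (le_cutWeight_contract huv hu hv hmin) hcard
  refine le_of_double_count hk q.succ_pos hM (card_lightCuts_mul_sum_sum_le hw hloop hpair) ?_
  have hchoose := Nat.choose_mul_succ_eq (b + q) b
  rw [show b + q + 1 - b = q + 1 by omega] at hchoose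
  calc (b + (q + 1)) * (2 ^ b * (b + q).choose b)
      = 2 ^ b * ((b + q).choose b * (b + q + 1)) := by ring
    _ = (q + 1) * (2 ^ b * (b + q + 1).choose b) := by rw [hchoose]; ring

end CutCounting

open Real

lemma two_mul_rpow_sub_one_le {x : ℝ} (hx : 2 ≤ x) (y : ℝ) : 2 * x ^ (y - 1) ≤ x ^ y := by
  rw [rpow_sub_one (by linarith), mul_div_assoc', div_le_iff₀ (by linarith), mul_comm]
  exact mul_le_mul_of_nonneg_left hx (rpow_nonneg (by linarith) y)

section Chernoff

variable {Ω ι : Type*}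

lemma exp_mul_ite_eq (Y : Ω → Bool) (t : ℝ) :
    (fun ω => exp (t * if Y ω then 1 else 0))
      = fun ω => 1 + {ω | Y ω = true}.indicator (fun _ => exp t - 1) ω := by
  funext ω
  by_cases h : Y ω <;> simp [h]

variable [MeasurableSpace Ω] {μ : Measure Ω} [IsProbabilityMeasure μ]

lemma ofReal_one_sub_le_measure {s : Set Ω} {δ : ℝ} (h : μ.real sᶜ ≤ δ) :
    ENNReal.ofReal (1 - δ) ≤ μ s := by
  refine ENNReal.ofReal_le_of_le_toReal ?_
  have hunion : (1 : ℝ) ≤ μ.real s + μ.real sᶜ := by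
    calc (1 : ℝ) = μ.real (s ∪ sᶜ) := by rw [Set.union_compl_self, probReal_univ]
      _ ≤ μ.real s + μ.real sᶜ := measureReal_union_le _ _
  rw [← measureReal_def]
  linarith

lemma integrable_exp_mul_ite {Y : Ω → Bool} (hY : Measurable Y) (t : ℝ) :
    Integrable (fun ω => exp (t * if Y ω then 1 else 0)) μ := by
  rw [exp_mul_ite_eq]
  exact (integrable_const 1).add ((integrable_const _).indicator (hY (measurableSet_singleton _)))

lemma mgf_ite_le {Y : Ω → Bool} (hY : Measurable Y) {t : ℝ} (ht : |t| ≤ 1) :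
    mgf (fun ω => if Y ω then (1 : ℝ) else 0) μ t
      ≤ exp ((t + t ^ 2) * μ.real {ω | Y ω = true}) := by
  have hs : MeasurableSet {ω | Y ω = true} := hY (measurableSet_singleton true)
  have hp := measureReal_nonneg (μ := μ) (s := {ω | Y ω = true})
  have hexp : exp t - 1 ≤ t + t ^ 2 := by
    have := abs_exp_sub_one_sub_id_le ht
    linarith [(abs_le.1 this).2]
  rw [mgf, exp_mul_ite_eq, integral_add (integrable_const 1) ((integrable_const _).indicator hs),
    integral_indicator_const _ hs]
  simp only [integral_const, probReal_univ, smul_eq_mul, mul_one]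
  calc 1 + μ.real {ω | Y ω = true} * (exp t - 1)
      ≤ exp (μ.real {ω | Y ω = true} * (exp t - 1)) := by
        linarith [add_one_le_exp (μ.real {ω | Y ω = true} * (exp t - 1))]
    _ ≤ exp ((t + t ^ 2) * μ.real {ω | Y ω = true}) := by
        rw [exp_le_exp, mul_comm]
        exact mul_le_mul_of_nonneg_right hexp hp

variable {X : ι → Ω → Bool} {s : Finset ι} {p : ℝ}

lemma mgf_sum_ite_le (hX : ∀ e, Measurable (X e)) (hind : iIndepFun X μ)
    (hp : ∀ e ∈ s, μ.real {ω | X e ω = true} = p) {t : ℝ} (ht : |t| ≤ 1) :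
    mgf (∑ e ∈ s, fun ω => if X e ω then (1 : ℝ) else 0) μ t
      ≤ exp ((t + t ^ 2) * (p * s.card)) := by
  have hmeas : Measurable fun b : Bool => if b then (1 : ℝ) else 0 := measurable_of_finite _
  have hY : iIndepFun (fun e ω => if X e ω then (1 : ℝ) else 0) μ := hind.comp _ fun _ => hmeas
  rw [hY.mgf_sum (fun e => hmeas.comp (hX e))]
  calc ∏ e ∈ s, mgf (fun ω => if X e ω then (1 : ℝ) else 0) μ t
      ≤ ∏ _e ∈ s, exp ((t + t ^ 2) * p) :=
        prod_le_prod (fun _ _ => mgf_nonneg) fun e he => hp e he ▸ mgf_ite_le (hX e) ht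
    _ = exp ((t + t ^ 2) * (p * s.card)) := by
        rw [prod_const, ← exp_nat_mul]
        ring_nf

lemma measureReal_sum_ite_notMem_Ioo_le (hX : ∀ e, Measurable (X e)) (hind : iIndepFun X μ)
    (hp : ∀ e ∈ s, μ.real {ω | X e ω = true} = p) {ε : ℝ} (hε₀ : 0 ≤ ε)
    (hε₂ : ε ≤ 2) :
    μ.real {ω | ∑ e ∈ s, (if X e ω then (1 : ℝ) else 0)
        ∉ Set.Ioo ((1 - ε) * (p * s.card)) ((1 + ε) * (p * s.card))}
      ≤ 2 * exp (-(ε ^ 2 * (p * s.card) / 4)) := by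
  set Z := ∑ e ∈ s, fun ω => if X e ω then (1 : ℝ) else 0
  set m := p * s.card
  have hmeas : Measurable fun b : Bool => if b then (1 : ℝ) else 0 := measurable_of_finite _
  have hY : iIndepFun (fun e ω => if X e ω then (1 : ℝ) else 0) μ := hind.comp _ fun _ => hmeas
  have hint : ∀ t, Integrable (fun ω => exp (t * Z ω)) μ := fun t =>
    hY.integrable_exp_mul_sum (fun e => hmeas.comp (hX e)) fun e _ =>
      integrable_exp_mul_ite (hX e) t
  have hupper : μ.real {ω | (1 + ε) * m ≤ Z ω} ≤ exp (-(ε ^ 2 * m / 4)) := by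
    refine (measure_ge_le_exp_mul_mgf _ (by positivity) (hint (ε / 2))).trans ?_
    calc exp (-(ε / 2) * ((1 + ε) * m)) * mgf Z μ (ε / 2)
        ≤ exp (-(ε / 2) * ((1 + ε) * m)) * exp ((ε / 2 + (ε / 2) ^ 2) * m) := by
          gcongr
          exact mgf_sum_ite_le hX hind hp (by rw [abs_of_nonneg (by positivity)]; linarith)
      _ = exp (-(ε ^ 2 * m / 4)) := by rw [← exp_add]; ring_nf
  have hlower : μ.real {ω | Z ω ≤ (1 - ε) * m} ≤ exp (-(ε ^ 2 * m / 4)) := by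
    refine (measure_le_le_exp_mul_mgf _ (by linarith) (hint (-(ε / 2)))).trans ?_
    calc exp (-(-(ε / 2)) * ((1 - ε) * m)) * mgf Z μ (-(ε / 2))
        ≤ exp (-(-(ε / 2)) * ((1 - ε) * m)) * exp ((-(ε / 2) + (-(ε / 2)) ^ 2) * m) := by
          gcongr
          exact mgf_sum_ite_le hX hind hp (by rw [abs_neg, abs_of_nonneg (by positivity)]; linarith)
      _ = exp (-(ε ^ 2 * m / 4)) := by rw [← exp_add]; ring_nf
  calc μ.real {ω | ∑ e ∈ s, (if X e ω then (1 : ℝ) else 0)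
          ∉ Set.Ioo ((1 - ε) * m) ((1 + ε) * m)}
      ≤ μ.real ({ω | Z ω ≤ (1 - ε) * m} ∪ {ω | (1 + ε) * m ≤ Z ω}) := by
        refine measureReal_mono (fun ω hω => ?_)
        simp only [Set.mem_ofPred_eq, Set.mem_Ioo, not_and_or, not_lt] at hω
        simpa [Z, Finset.sum_apply] using hω
    _ ≤ 2 * exp (-(ε ^ 2 * m / 4)) := by
        linarith [measureReal_union_le (μ := μ)
          {ω | Z ω ≤ (1 - ε) * m} {ω | (1 + ε) * m ≤ Z ω}]

end Chernoff

open CutCounting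

section Sampling

variable (G : SimpleGraph V) [DecidableRel G.Adj]

lemma mem_properCuts_univ {S : Finset V} : S ∈ properCuts univ ↔ S.Nonempty ∧ S ≠ univ := by
  rw [mem_properCuts, ssubset_univ_iff, and_comm]

lemma cutWeight_adj_univ (S : Finset V) :
    cutWeight (fun u v => if G.Adj u v then 1 else 0) univ S = cutValN G S := by
  simp only [cutWeight, cutValN, compl_eq_univ_sdiff]

lemma cutValN_le_card_mul_card (S : Finset V) :
    cutValN G S ≤ Fintype.card V * Fintype.card V :=
  calc cutValN G S ≤ ∑ _u ∈ S, ∑ _v ∈ Sᶜ, 1 :=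
        sum_le_sum fun _ _ => sum_le_sum fun _ _ => by split_ifs <;> omega
    _ = S.card * Sᶜ.card := by simp
    _ ≤ Fintype.card V * Fintype.card V := Nat.mul_le_mul (card_le_univ S) (card_le_univ Sᶜ)

variable {G} {k : ℕ}

lemma card_filter_properCuts_le (hk : 0 < k) {b : ℕ} (hb : 0 < b) (hn : 2 ≤ Fintype.card V)
    (hmin : ∀ S : Finset V, S.Nonempty → S ≠ univ → k ≤ cutValN G S) :
    ((properCuts univ).filter fun S => 2 * cutValN G S ≤ b * k).card
      ≤ Fintype.card V ^ (2 * b) := by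
  set n := Fintype.card V
  rcases le_or_gt b n with hbn | hnb
  · have hlight : (properCuts univ).filter (fun S => 2 * cutValN G S ≤ b * k)
        = lightCuts (fun u v => if G.Adj u v then 1 else 0) univ b k := by
      simp only [lightCuts, cutWeight_adj_univ]
    have hsymm : ∀ u v, (if G.Adj u v then 1 else 0) = if G.Adj v u then 1 else 0 :=
      fun u v => by simp only [G.adj_comm]
    calc _ ≤ 2 ^ b * n.choose b := hlight ▸ card_lightCuts_le hsymm (by simp) hk hb hbn
          fun S hS hne => cutWeight_adj_univ G S ▸ hmin S hne (ssubset_univ_iff.1 hS)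
      _ ≤ n ^ b * n ^ b := Nat.mul_le_mul (Nat.pow_le_pow_left hn b) (Nat.choose_le_pow n b)
      _ = n ^ (2 * b) := by ring
  · calc _ ≤ (univ : Finset (Finset V)).card := card_le_card (subset_univ _)
      _ = 2 ^ n := by rw [card_univ, Fintype.card_finset]
      _ ≤ n ^ n := Nat.pow_le_pow_left hn n
      _ ≤ n ^ (2 * b) := Nat.pow_le_pow_right (by omega) (by omega)

/-- Group the cuts by `⌊cutValN G S / k⌋ = i`: there are at most `n ^ (4 i + 4)` of them, each
contributing at most `n ^ (-a i)`. -/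
lemma sum_rpow_neg_cutValN_le (hk : 0 < k) (hn : 2 ≤ Fintype.card V)
    (hmin : ∀ S : Finset V, S.Nonempty → S ≠ univ → k ≤ cutValN G S) {a : ℝ}
    (ha : 4 ≤ a) :
    ∑ S ∈ properCuts univ, (Fintype.card V : ℝ) ^ (-(a * cutValN G S / k))
      ≤ (Fintype.card V : ℝ) ^ (10 - a) := by
  set n := Fintype.card V
  have hn1 : (1 : ℝ) ≤ n := by exact_mod_cast (by omega : 1 ≤ n)
  set j : Finset V → ℕ := fun S => cutValN G S / k
  have hj : ∀ S ∈ properCuts univ, j S ∈ Icc 1 (n * n) := by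
    intro S hS
    rw [mem_properCuts_univ] at hS
    exact mem_Icc.2 ⟨(Nat.one_le_div_iff hk).2 (hmin S hS.1 hS.2),
      (Nat.div_le_self _ _).trans (cutValN_le_card_mul_card G S)⟩
  have hfiber : ∀ i ∈ Icc 1 (n * n),
      ∑ S ∈ (properCuts univ).filter (fun S => j S = i), (n : ℝ) ^ (-(a * cutValN G S / k))
        ≤ (n : ℝ) ^ (8 - a) := by
    intro i hi
    have hi1 : (1 : ℝ) ≤ i := by exact_mod_cast (mem_Icc.1 hi).1
    have hcount : ((properCuts univ).filter fun S => j S = i).card ≤ n ^ (2 * (2 * i + 2)) := by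
      refine (card_le_card fun S hS => ?_).trans
        (card_filter_properCuts_le hk (by omega) hn hmin)
      obtain ⟨hS, hjS⟩ := mem_filter.1 hS
      refine mem_filter.2 ⟨hS, ?_⟩
      have := Nat.lt_div_mul_add (a := cutValN G S) hk
      simp only [j] at hjS
      rw [hjS] at this
      nlinarith
    calc ∑ S ∈ (properCuts univ).filter (fun S => j S = i), (n : ℝ) ^ (-(a * cutValN G S / k))
        ≤ ∑ _S ∈ (properCuts univ).filter (fun S => j S = i), (n : ℝ) ^ (-(a * i)) := by
          refine sum_le_sum fun S hS => rpow_le_rpow_of_exponent_le hn1 ?_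
          have hiS : (i : ℝ) ≤ cutValN G S / k := (mem_filter.1 hS).2 ▸ Nat.cast_div_le
          rw [neg_le_neg_iff, mul_div_assoc]
          exact mul_le_mul_of_nonneg_left hiS (by linarith)
      _ ≤ (n : ℝ) ^ (4 * i + 4 : ℝ) * (n : ℝ) ^ (-(a * i)) := by
          rw [sum_const, nsmul_eq_mul]
          gcongr
          rw [show (4 * i + 4 : ℝ) = ((2 * (2 * i + 2) : ℕ) : ℝ) by push_cast; ring,
            rpow_natCast]
          exact_mod_cast hcount
      _ ≤ (n : ℝ) ^ (8 - a) := by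
          rw [← rpow_add (by linarith)]
          exact rpow_le_rpow_of_exponent_le hn1 (by nlinarith)
  calc ∑ S ∈ properCuts univ, (n : ℝ) ^ (-(a * cutValN G S / k))
      = ∑ i ∈ Icc 1 (n * n), ∑ S ∈ (properCuts univ).filter (fun S => j S = i),
          (n : ℝ) ^ (-(a * cutValN G S / k)) := (sum_fiberwise_of_maps_to hj _).symm
    _ ≤ ∑ _i ∈ Icc 1 (n * n), (n : ℝ) ^ (8 - a) := sum_le_sum hfiber
    _ = (n : ℝ) ^ (10 - a) := by
        rw [sum_const, Nat.card_Icc, nsmul_eq_mul, show 10 - a = 2 + (8 - a) by ring,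
          rpow_add (by linarith), Nat.add_sub_cancel, rpow_two]
        push_cast
        ring

variable (G)

def cutEdges (S : Finset V) : Finset (Sym2 V) :=
  ((S ×ˢ Sᶜ).filter fun z => G.Adj z.1 z.2).image fun z => s(z.1, z.2)

lemma sum_cutEdges {M : Type*} [AddCommMonoid M] (f : Sym2 V → M) (S : Finset V) :
    ∑ e ∈ cutEdges G S, f e
      = ∑ u ∈ S, ∑ v ∈ Sᶜ, if G.Adj u v then f s(u, v) else 0 := by
  rw [cutEdges, sum_image, sum_filter, sum_product]
  rintro ⟨u₁, v₁⟩ h₁ ⟨u₂, v₂⟩ h₂ h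
  simp only [coe_filter, mem_product, mem_compl, Set.mem_ofPred_eq] at h₁ h₂
  rcases Sym2.eq_iff.1 h with ⟨rfl, rfl⟩ | ⟨rfl, rfl⟩
  · rfl
  · exact absurd h₁.1.1 h₂.1.2

lemma card_cutEdges (S : Finset V) : (cutEdges G S).card = cutValN G S := by
  rw [card_eq_sum_ones, sum_cutEdges, cutValN]

lemma cutEdges_subset_edgeFinset (S : Finset V) : cutEdges G S ⊆ G.edgeFinset := by
  intro e he
  obtain ⟨z, hz, rfl⟩ := mem_image.1 he
  simpa using (mem_filter.1 hz).2

lemma cutVal_gWeight (S : Finset V) : cutVal (gWeight G) S = cutValN G S := by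
  simp [cutVal, cutValN, gWeight]

noncomputable def sampledWeight {Ω : Type*} (X : Sym2 V → Ω → Bool) (p : ℝ) (ω : Ω) :
    V → V → ℝ :=
  fun u v => if G.Adj u v ∧ X s(u, v) ω = true then 1 / p else 0

lemma cutVal_sampledWeight {Ω : Type*} (X : Sym2 V → Ω → Bool) (p : ℝ) (ω : Ω)
    (S : Finset V) :
    cutVal (sampledWeight G X p ω) S
      = (∑ e ∈ cutEdges G S, if X e ω then (1 : ℝ) else 0) / p := by
  rw [sum_div, sum_cutEdges, cutVal]
  simp only [sampledWeight, ite_and, ite_div, zero_div]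

variable {G} {Ω : Type*} [MeasurableSpace Ω] {μ : Measure Ω} [IsProbabilityMeasure μ]
  {X : Sym2 V → Ω → Bool}

lemma measure_not_isSparsification_eq_zero (hX : ∀ e, Measurable (X e))
    (hprob : ∀ e ∈ G.edgeFinset, μ {ω | X e ω = true} = 1) {ε : ℝ} (hε : 0 ≤ ε) :
    μ {ω | IsSparsification ε (gWeight G) (sampledWeight G X 1 ω)}ᶜ = 0 := by
  refine measure_mono_null
    (t := ⋃ e ∈ (G.edgeFinset : Set (Sym2 V)), {ω | X e ω = true}ᶜ) ?_
    ((measure_biUnion_null_iff G.edgeFinset.countable_toSet).2 fun e he =>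
      (prob_compl_eq_zero_iff (hX e (measurableSet_singleton true))).2 (hprob e he))
  intro ω hω
  by_contra hkept
  simp only [Set.mem_iUnion, Set.mem_compl_iff, Set.mem_ofPred_eq, not_exists, not_not] at hkept
  have hweight : sampledWeight G X 1 ω = gWeight G := by
    funext u v
    by_cases huv : G.Adj u v
    · simp [sampledWeight, gWeight, huv, hkept s(u, v) (by simpa using huv)]
    · simp [sampledWeight, gWeight, huv]
  refine hω fun S _ _ => ?_
  have hcut := cutVal_gWeight G S ▸ (Nat.cast_nonneg (cutValN G S) : (0 : ℝ) ≤ _)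
  rw [hweight]
  constructor <;> nlinarith

lemma measureReal_not_isSparsification_le (hX : ∀ e, Measurable (X e)) (hind : iIndepFun X μ)
    {p : ℝ} (hp : 0 < p) (hprob : ∀ e ∈ G.edgeFinset, μ.real {ω | X e ω = true} = p)
    {ε : ℝ} (hε₀ : 0 ≤ ε) (hε₂ : ε ≤ 2) :
    μ.real {ω | IsSparsification ε (gWeight G) (sampledWeight G X p ω)}ᶜ
      ≤ ∑ S ∈ properCuts univ, 2 * exp (-(ε ^ 2 * (p * cutValN G S) / 4)) := by
  set Z : Finset V → Ω → ℝ := fun S ω =>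
    ∑ e ∈ cutEdges G S, if X e ω then (1 : ℝ) else 0
  set bad : Finset V → Set Ω := fun S => {ω | Z S ω ∉
    Set.Ioo ((1 - ε) * (p * (cutEdges G S).card)) ((1 + ε) * (p * (cutEdges G S).card))}
  have hsub : {ω | IsSparsification ε (gWeight G) (sampledWeight G X p ω)}ᶜ
      ⊆ ⋃ S ∈ properCuts univ, bad S := by
    intro ω hω
    by_contra hgood
    simp only [Set.mem_iUnion, not_exists, bad, Set.mem_ofPred_eq, not_not] at hgood
    refine hω fun S hne hne' => ?_
    obtain ⟨hlo, hhi⟩ := hgood S (mem_properCuts_univ.2 ⟨hne, hne'⟩)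
    rw [cutVal_sampledWeight, cutVal_gWeight, ← card_cutEdges, le_div_iff₀ hp, div_le_iff₀ hp]
    constructor <;> nlinarith
  calc μ.real {ω | IsSparsification ε (gWeight G) (sampledWeight G X p ω)}ᶜ
      ≤ ∑ S ∈ properCuts univ, μ.real (bad S) :=
        (measureReal_mono hsub (measure_ne_top _ _)).trans (measureReal_biUnion_finset_le _ _)
    _ ≤ ∑ S ∈ properCuts univ, 2 * exp (-(ε ^ 2 * (p * cutValN G S) / 4)) := by
        refine sum_le_sum fun S _ => ?_
        rw [← card_cutEdges G S]
        exact measureReal_sum_ite_notMem_Ioo_le hX hind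
          (fun e he => hprob e (cutEdges_subset_edgeFinset G S he)) hε₀ hε₂

lemma measureReal_not_isSparsification_le_rpow (hX : ∀ e, Measurable (X e))
    (hind : iIndepFun X μ) (hk : 0 < k) (hn : 2 ≤ Fintype.card V)
    (hmin : ∀ S : Finset V, S.Nonempty → S ≠ univ → k ≤ cutValN G S)
    {ε : ℝ} (hε₀ : 0 < ε) (hε₂ : ε ≤ 2) {a : ℝ} (ha : 4 ≤ a)
    (hprob : ∀ e ∈ G.edgeFinset,
      μ.real {ω | X e ω = true} = 4 * a * log (Fintype.card V) / (ε ^ 2 * k)) :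
    μ.real {ω | IsSparsification ε (gWeight G)
        (sampledWeight G X (4 * a * log (Fintype.card V) / (ε ^ 2 * k)) ω)}ᶜ
      ≤ 2 * (Fintype.card V : ℝ) ^ (10 - a) := by
  set n := Fintype.card V
  have hn₀ : (0 : ℝ) < n := by positivity
  have hp : 0 < 4 * a * log n / (ε ^ 2 * k) := by
    have := log_pos (by exact_mod_cast hn : (1 : ℝ) < n)
    have : (0 : ℝ) < k := by exact_mod_cast hk
    positivity
  calc _ ≤ ∑ S ∈ properCuts univ,
        2 * exp (-(ε ^ 2 * (4 * a * log n / (ε ^ 2 * k) * cutValN G S) / 4)) :=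
        measureReal_not_isSparsification_le hX hind hp hprob hε₀.le hε₂
    _ = 2 * ∑ S ∈ properCuts univ, (n : ℝ) ^ (-(a * cutValN G S / k)) := by
        rw [mul_sum]
        refine sum_congr rfl fun S _ => ?_
        have : (k : ℝ) ≠ 0 := by positivity
        rw [rpow_def_of_pos hn₀]
        field_simp
    _ ≤ 2 * (n : ℝ) ^ (10 - a) := by
        gcongr
        exact sum_rpow_neg_cutValN_le hk hn hmin ha

end Sampling

/-- For every `d ≥ 1` there is a constant `c > 0` such that: sampling the edges of a
`k`-connected graph on `n ≥ 2` vertices independently with probability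
`p = min(1, c log n / (ε² k))`, giving sampled edges weight `1/p`, yields an
`ε`-sparsification with probability at least `1 - n^{-d}`. -/
theorem stmt2 (d : ℝ) (hd : 1 ≤ d) :
    ∃ c : ℝ, 0 < c ∧
      ∀ (V : Type) [Fintype V] [DecidableEq V] (G : SimpleGraph V) [DecidableRel G.Adj]
        (k : ℕ) (ε : ℝ) (Ω : Type) [MeasurableSpace Ω] (μ : Measure Ω)
        [IsProbabilityMeasure μ] (X : Sym2 V → Ω → Bool),
        2 ≤ Fintype.card V → 1 ≤ k →
        (∀ S : Finset V, S.Nonempty → S ≠ Finset.univ → k ≤ cutValN G S) →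
        0 < ε → ε < 1 →
        (∀ e, Measurable (X e)) →
        iIndepFun X μ →
        (∀ e ∈ G.edgeFinset, μ {ω | X e ω = true} =
          ENNReal.ofReal (min 1 (c * Real.log (Fintype.card V) / (ε ^ 2 * k)))) →
        μ {ω | IsSparsification ε (gWeight G)
            (fun u v => if G.Adj u v ∧ X s(u, v) ω = true
              then 1 / min 1 (c * Real.log (Fintype.card V) / (ε ^ 2 * k)) else 0)} ≥
          ENNReal.ofReal (1 - (Fintype.card V : ℝ) ^ (-d)) := by
  -- `c = 4 a` with `a = d + 11` turns the union bound `2 n ^ (10 - a)` into `2 n ^ (-d - 1)`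
  refine ⟨4 * (d + 11), by linarith, ?_⟩
  intro V _ _ G _ k ε Ω _ μ _ X hn hk hmin hε₀ hε₁ hX hind hprob
  set n := Fintype.card V
  set q := 4 * (d + 11) * Real.log n / (ε ^ 2 * k)
  change ENNReal.ofReal (1 - (n : ℝ) ^ (-d))
    ≤ μ {ω | IsSparsification ε (gWeight G) (sampledWeight G X (min 1 q) ω)}
  apply ofReal_one_sub_le_measure
  rcases le_or_gt 1 q with hq | hq
  · rw [min_eq_left hq] at hprob ⊢
    rw [measureReal_def, measure_not_isSparsification_eq_zero hX (by simpa using hprob) hε₀.le]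
    simpa using rpow_nonneg (Nat.cast_nonneg n) _
  rw [min_eq_right hq.le] at hprob ⊢
  have hq₀ : 0 < q := by
    have := log_pos (by exact_mod_cast hn : (1 : ℝ) < n)
    positivity
  calc μ.real {ω | IsSparsification ε (gWeight G) (sampledWeight G X q ω)}ᶜ
      ≤ 2 * (n : ℝ) ^ (-d - 1) := by
        refine (measureReal_not_isSparsification_le_rpow hX hind hk hn hmin hε₀ (by linarith)
          (a := d + 11) (by linarith) fun e he => ?_).trans_eq
          (by rw [show 10 - (d + 11) = -d - 1 by ring])
        rw [measureReal_def, hprob e he, ENNReal.toReal_ofReal hq₀.le]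
    _ ≤ (n : ℝ) ^ (-d) := two_mul_rpow_sub_one_le (by exact_mod_cast hn) _
end

section
/- Let G = (V, E) be an undirected graph on n ≥ 2 vertices in which every edge is k-weak. Then V can be partitioned into t = ⌈log₂ n⌉ (possibly empty) sets W_1, …, W_t such that for every i ∈ {1, …, t} and every v ∈ W_i, the degree of v in the subgraph of G induced by W_i ∪ W_{i+1} ∪ ⋯ ∪ W_t is at most 4k. -/
/-!
Every vertex set `U` spans few edges: if `U` contains an edge, it is not `k`-connected (that edge
is `k`-weak), so a cut of value `< k` splits it, and induction gives
`∑_{v ∈ U} deg_U v ≤ 2k(|U| - 1)`. Hence, removing from `U` all vertices of degree `≤ 4k` in `U`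
leaves fewer than `|U| / 2` of them. Iterating from `V`, the surviving sets are empty after
`⌈log₂ n⌉` rounds, and `W i` is the set of vertices removed in round `i`.
-/

open Finset

variable {V : Type} [Fintype V] [DecidableEq V]

section AdjCount

omit [Fintype V] [DecidableEq V]

variable (G : SimpleGraph V) [DecidableRel G.Adj]

def adjCount (A B : Finset V) : ℕ :=
  ∑ u ∈ A, ∑ v ∈ B, if G.Adj u v then 1 else 0

lemma adjCount_comm (A B : Finset V) : adjCount G A B = adjCount G B A := by
  rw [adjCount, sum_comm]
  simp only [adjCount, G.adj_comm]

lemma adjCount_mono_left {A A' : Finset V} (h : A ⊆ A') (B : Finset V) :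
    adjCount G A B ≤ adjCount G A' B :=
  sum_le_sum_of_subset h

lemma adjCount_eq_sum_card (A B : Finset V) :
    adjCount G A B = ∑ u ∈ A, #{v ∈ B | G.Adj u v} := by
  simp only [adjCount, card_filter]

def highDegree (d : ℕ) (U : Finset V) : Finset V :=
  {v ∈ U | d < #{u ∈ U | G.Adj v u}}

lemma two_mul_card_highDegree_le {k : ℕ} {U : Finset V}
    (hU : adjCount G U U ≤ 2 * k * (#U - 1)) :
    2 * #(highDegree G (4 * k) U) ≤ #U - 1 := by
  set C := highDegree G (4 * k) U
  have hdeg : #C * (4 * k + 1) ≤ adjCount G C U := by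
    rw [adjCount_eq_sum_card, ← smul_eq_mul]
    exact card_nsmul_le_sum _ _ _ fun v hv => (mem_filter.mp hv).2
  have hsub : adjCount G C U ≤ adjCount G U U := adjCount_mono_left G (filter_subset _ _) U
  by_contra! h
  nlinarith

variable [DecidableEq V]

lemma adjCount_union_left {A A' : Finset V} (h : Disjoint A A') (B : Finset V) :
    adjCount G (A ∪ A') B = adjCount G A B + adjCount G A' B :=
  sum_union h

lemma adjCount_union_right (A : Finset V) {B B' : Finset V} (h : Disjoint B B') :
    adjCount G A (B ∪ B') = adjCount G A B + adjCount G A B' := by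
  simp only [adjCount, sum_union h, sum_add_distrib]

lemma cutValOn_eq_adjCount (U T : Finset V) : cutValOn G U T = adjCount G T (U \ T) := rfl

lemma adjCount_self_eq_of_subset {T U : Finset V} (hT : T ⊆ U) :
    adjCount G U U = adjCount G T T + adjCount G (U \ T) (U \ T) + 2 * cutValOn G U T := by
  have hU : U = T ∪ (U \ T) := (union_sdiff_of_subset hT).symm
  have hdisj : Disjoint T (U \ T) := disjoint_sdiff
  conv_lhs => rw [hU]
  rw [adjCount_union_left G hdisj, adjCount_union_right G _ hdisj, adjCount_union_right G _ hdisj,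
    adjCount_comm G (U \ T) T, cutValOn_eq_adjCount]
  ring

end AdjCount

section Sparsity

variable (G : SimpleGraph V) [DecidableRel G.Adj]

lemma cutValOn_singleton_le (U : Finset V) (u : V) : cutValOn G U {u} ≤ Fintype.card V := by
  rw [cutValOn_eq_adjCount, adjCount_eq_sum_card, sum_singleton]
  exact card_le_univ _

lemma le_strongConn_s6 {k : ℕ} {U : Finset V} (hU : KConnOn G k U) {u v : V} (huv : G.Adj u v)
    (hu : u ∈ U) (hv : v ∈ U) : k ≤ strongConn G s(u, v) := by
  have hbdd : BddAbove {k | ∃ U : Finset V, (∀ x ∈ s(u, v), x ∈ U) ∧ KConnOn G k U} := by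
    refine ⟨Fintype.card V, ?_⟩
    rintro k' ⟨U', heU', hU'⟩
    have hvU' : v ∈ U' := heU' v (Sym2.mem_mk_right u v)
    have hne : {u} ≠ U' := fun h => huv.ne (mem_singleton.mp (h ▸ hvU')).symm
    exact (hU' {u} (singleton_subset_iff.mpr (heU' u (Sym2.mem_mk_left u v)))
      (singleton_nonempty u) hne).trans (cutValOn_singleton_le G U' u)
  refine le_csSup hbdd ⟨U, fun x hx => ?_, hU⟩
  rcases Sym2.mem_iff.mp hx with rfl | rfl <;> assumption

lemma adjCount_self_le_of_forall_strongConn_lt {k : ℕ}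
    (hweak : ∀ e ∈ G.edgeFinset, strongConn G e < k) (U : Finset V) :
    adjCount G U U ≤ 2 * k * (#U - 1) := by
  induction U using strongInduction with
  | H U ih =>
  by_cases hedge : ∃ u ∈ U, ∃ v ∈ U, G.Adj u v
  · obtain ⟨u, hu, v, hv, huv⟩ := hedge
    have hnot : ¬ KConnOn G k U := fun hU =>
      (le_strongConn_s6 G hU huv hu hv).not_gt (hweak _ (G.mem_edgeFinset.mpr huv))
    obtain ⟨T, hTU, hT, hTne, hcut⟩ : ∃ T ⊆ U, T.Nonempty ∧ T ≠ U ∧ cutValOn G U T < k := by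
      simpa [KConnOn] using hnot
    have hST : #(U \ T) + #T = #U := card_sdiff_add_card_eq_card hTU
    have hS : (U \ T).Nonempty := sdiff_nonempty.mpr fun h => hTne (hTU.antisymm h)
    have ihT := ih T (ssubset_of_subset_of_ne hTU hTne)
    have ihS := ih (U \ T) (sdiff_ssubset hTU hT)
    have hTpos := hT.card_pos
    have hSpos := hS.card_pos
    rw [adjCount_self_eq_of_subset G hTU]
    calc adjCount G T T + adjCount G (U \ T) (U \ T) + 2 * cutValOn G U T
        ≤ 2 * k * (#T - 1) + 2 * k * (#(U \ T) - 1) + 2 * k := by omega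
      _ = 2 * k * (#U - 1) := by
        rw [← hST, ← mul_add, ← mul_add_one]; congr 1; omega
  · push Not at hedge
    have hzero : adjCount G U U = 0 :=
      sum_eq_zero fun u hu => sum_eq_zero fun v hv => if_neg (hedge u hu v hv)
    exact hzero ▸ Nat.zero_le _

end Sparsity

section Peeling

variable (G : SimpleGraph V) [DecidableRel G.Adj] (d : ℕ)

def peel : ℕ → Finset V
  | 0 => univ
  | i + 1 => highDegree G d (peel i)

def layer (i : ℕ) : Finset V := peel G d i \ peel G d (i + 1)

omit [DecidableEq V] in
lemma peel_antitone : Antitone (peel G d) :=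
  antitone_nat_of_succ_le fun _ => filter_subset _ _

variable {G d}

lemma card_adj_le_of_mem_layer {i : ℕ} {v : V} (hv : v ∈ layer G d i) :
    #{u ∈ peel G d i | G.Adj v u} ≤ d := by
  simp only [layer, peel, highDegree, mem_sdiff, mem_filter, not_and, not_lt] at hv
  exact hv.2 hv.1

lemma mem_peel_of_mem_layer {i j : ℕ} (hij : i ≤ j) {v : V} (hv : v ∈ layer G d j) :
    v ∈ peel G d i :=
  peel_antitone G d hij (mem_sdiff.mp hv).1

lemma eq_of_mem_layer {i j : ℕ} {v : V} (hi : v ∈ layer G d i) (hj : v ∈ layer G d j) :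
    i = j := by
  wlog hij : i ≤ j generalizing i j
  · exact (this hj hi (le_of_not_ge hij)).symm
  by_contra hne
  exact (mem_sdiff.mp hi).2 (mem_peel_of_mem_layer (by omega) hj)

lemma existsUnique_mem_layer {t : ℕ} {v : V} (hv : v ∉ peel G d t) :
    ∃! i : Fin t, v ∈ layer G d i := by
  induction t with
  | zero => exact absurd (mem_univ v) hv
  | succ t ih =>
    by_cases hvt : v ∈ peel G d t
    · exact ⟨Fin.last t, mem_sdiff.mpr ⟨hvt, hv⟩, fun j hj =>
        Fin.ext (eq_of_mem_layer hj (mem_sdiff.mpr ⟨hvt, hv⟩))⟩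
    · obtain ⟨i, hi, -⟩ := ih hvt
      exact ⟨i.castSucc, hi, fun j hj => Fin.ext (eq_of_mem_layer hj hi)⟩

end Peeling

section Halving

variable {G : SimpleGraph V} [DecidableRel G.Adj] {k : ℕ}

lemma two_mul_card_peel_succ_le (hweak : ∀ e ∈ G.edgeFinset, strongConn G e < k) (i : ℕ) :
    2 * #(peel G (4 * k) (i + 1)) ≤ #(peel G (4 * k) i) - 1 :=
  two_mul_card_highDegree_le G (adjCount_self_le_of_forall_strongConn_lt G hweak _)

lemma two_pow_mul_card_peel_le (hweak : ∀ e ∈ G.edgeFinset, strongConn G e < k) :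
    ∀ i, (peel G (4 * k) i).Nonempty → 2 ^ i * (#(peel G (4 * k) i) + 1) ≤ Fintype.card V + 1
  | 0, _ => by simp [peel, card_univ]
  | i + 1, hne => by
    have hne' := hne.mono (peel_antitone G _ i.le_succ)
    have hhalf := two_mul_card_peel_succ_le hweak i
    have hpos := hne'.card_pos
    calc 2 ^ (i + 1) * (#(peel G (4 * k) (i + 1)) + 1)
        = 2 ^ i * (2 * #(peel G (4 * k) (i + 1)) + 2) := by ring
      _ ≤ 2 ^ i * (#(peel G (4 * k) i) + 1) := Nat.mul_le_mul_left _ (by omega)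
      _ ≤ Fintype.card V + 1 := two_pow_mul_card_peel_le hweak i hne'

lemma peel_clog_eq_empty (hn : 2 ≤ Fintype.card V)
    (hweak : ∀ e ∈ G.edgeFinset, strongConn G e < k) :
    peel G (4 * k) (Nat.clog 2 (Fintype.card V)) = ∅ := by
  set t := Nat.clog 2 (Fintype.card V)
  by_contra hne
  have hne := nonempty_iff_ne_empty.mpr hne
  have hcard := two_pow_mul_card_peel_le hweak t hne
  have hpow : Fintype.card V ≤ 2 ^ t := Nat.le_pow_clog one_lt_two _
  have hpow' : 1 < 2 ^ t := Nat.one_lt_two_pow (Nat.clog_pos one_lt_two hn).ne'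
  have hmul : 2 ^ t * 2 ≤ 2 ^ t * (#(peel G (4 * k) t) + 1) :=
    Nat.mul_le_mul_left _ (by have := hne.card_pos; omega)
  omega

end Halving

/-- If every edge of a graph `G` on `n ≥ 2` vertices is `k`-weak, then the vertex
set can be partitioned into `t = ⌈log₂ n⌉` (possibly empty) sets `W 0, …, W (t-1)`
such that every `v ∈ W i` has degree at most `4k` in the subgraph induced by
`W i ∪ W (i+1) ∪ ⋯ ∪ W (t-1)`. -/
theorem stmt6 (V : Type) [Fintype V] [DecidableEq V] (G : SimpleGraph V) [DecidableRel G.Adj]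
    (hn : 2 ≤ Fintype.card V) (k : ℕ)
    (hweak : ∀ e ∈ G.edgeFinset, strongConn G e < k) :
    ∃ W : Fin (Nat.clog 2 (Fintype.card V)) → Finset V,
      (∀ v : V, ∃! i, v ∈ W i) ∧
      ∀ i, ∀ v ∈ W i,
        (Finset.univ.filter (fun u => G.Adj v u ∧ ∃ j, i ≤ j ∧ u ∈ W j)).card ≤ 4 * k := by
  have hempty := peel_clog_eq_empty hn hweak
  refine ⟨fun i => layer G (4 * k) i, fun v => ?_, fun i v hv => ?_⟩
  · exact existsUnique_mem_layer (hempty ▸ notMem_empty v)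
  · refine (card_le_card fun u hu => ?_).trans (card_adj_le_of_mem_layer hv)
    obtain ⟨hadj, j, hij, huj⟩ := (mem_filter.mp hu).2
    exact mem_filter.mpr ⟨mem_peel_of_mem_layer (Fin.le_iff_val_le_val.mp hij) huj, hadj⟩
end

section
/- Let X_1, …, X_n be mutually independent random variables where, for each i, X_i takes the value 1/p_i with probability p_i and the value 0 otherwise, for some p_i ∈ (0, 1]. Let p ∈ (0, 1] satisfy p ≤ p_i for every i, let ε ∈ (0, 1), and let N ≥ n. Then Pr[|Σ_{i=1}^n X_i − n| > εN] < 2 e^{−0.38 ε² p N}. -/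
/-!
Each `X i` has moment generating function `1 + pᵢ (e^{t/pᵢ} - 1) ≤ exp (pᵢ (e^{t/pᵢ} - 1))`,
and `p ↦ p (e^{t/p} - 1)` is antitone by convexity of `exp`, so `q • ∑ X i` is dominated in
moment generating function by a Poisson variable of mean `n q`. The Chernoff bound at
`t = q log (1 + ε)` and at `t = -q ε` then bounds the two tails by
`exp (-q N ((1 + ε) log (1 + ε) - ε))` and `exp (-q N ε² / 2)`, the gap `N - n ≥ 0` only
helping. Finally `(1 + ε) log (1 + ε) - ε ≥ 0.38 ε²` on `[0, 1]`, and `0.38 < 1/2` makes the sum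
of the two tails strictly smaller than `2 e^{-0.38 ε² q N}` as soon as `N > 0`.
-/

open MeasureTheory ProbabilityTheory Real

lemma exp_le_quartic {r : ℝ} (hr : |r| ≤ 1) :
    exp r ≤ 1 + r + r ^ 2 / 2 + r ^ 3 / 6 + 5 * r ^ 4 / 96 := by
  have h := (abs_le.1 (Real.exp_bound hr (n := 4) (by norm_num))).2
  rw [← abs_pow, abs_of_nonneg (by positivity)] at h
  norm_num [Finset.sum_range_succ, Nat.factorial] at h
  linarith

lemma exp_neg_le_quadratic {x : ℝ} (hx : 0 ≤ x) : exp (-x) ≤ 1 - x + x ^ 2 / 2 := by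
  have hcubic : 1 + x + x ^ 2 / 2 + x ^ 3 / 6 ≤ exp x := by
    simpa [Finset.sum_range_succ, Nat.factorial] using sum_le_exp_of_nonneg hx 4
  have hpos : 0 < 1 - x + x ^ 2 / 2 := by nlinarith [sq_nonneg (x - 1)]
  rw [exp_neg, inv_le_iff_one_le_mul₀ (exp_pos x)]
  calc 1 ≤ (1 - x + x ^ 2 / 2) * (1 + x + x ^ 2 / 2 + x ^ 3 / 6) := by
        nlinarith [pow_nonneg hx 3, pow_nonneg hx 4, pow_nonneg hx 5]
    _ ≤ (1 - x + x ^ 2 / 2) * exp x := by gcongr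

lemma quartic_le_one_add {x r : ℝ} (h0 : 0 ≤ x) (h1 : x ≤ 1)
    (hr : r * (1 + x) = x + 0.38 * x ^ 2) :
    1 + r + r ^ 2 / 2 + r ^ 3 / 6 + 5 * r ^ 4 / 96 ≤ 1 + x := by
  have hx : 0 ≤ 1 - x := by linarith
  have e2 : 0 ≤ x ^ 2 * (1 - x) ^ 6 := by positivity
  have e3 : 0 ≤ x ^ 3 * (1 - x) ^ 5 := mul_nonneg (by positivity) (pow_nonneg hx 5)
  have e4 : 0 ≤ x ^ 4 * (1 - x) ^ 4 := by positivity
  have e5 : 0 ≤ x ^ 5 * (1 - x) ^ 3 := mul_nonneg (by positivity) (pow_nonneg hx 3)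
  have e6 : 0 ≤ x ^ 6 * (1 - x) ^ 2 := by positivity
  have e7 : 0 ≤ x ^ 7 * (1 - x) := mul_nonneg (by positivity) hx
  have e8 : 0 ≤ x ^ 8 := by positivity
  -- the weights of `96 (1 + x) ^ 5 - ⋯` in the Bernstein basis `x ^ k * (1 - x) ^ (8 - k)`
  have hcleared : 96 * (1 + x) ^ 4 + 96 * (x + 0.38 * x ^ 2) * (1 + x) ^ 3
      + 48 * (x + 0.38 * x ^ 2) ^ 2 * (1 + x) ^ 2 + 16 * (x + 0.38 * x ^ 2) ^ 3 * (1 + x)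
      + 5 * (x + 0.38 * x ^ 2) ^ 4 ≤ 96 * (1 + x) ^ 5 := by
    linear_combination (288/25) * e2 + (496/5) * e3 + (209143/625) * e4 + (345826/625) * e5
      + (14134989/31250) * e6 + (4822947/31250) * e7 + (10353999/1250000) * e8
  rw [← hr] at hcleared
  refine le_of_mul_le_mul_left (a := 96 * (1 + x) ^ 4) ?_ (by positivity)
  linear_combination hcleared

/-- The constant `0.38` is just below `2 log 2 - 1`, the value at `x = 1` of the decreasing
function `((1 + x) log (1 + x) - x) / x²`. -/
lemma add_mul_sq_le_one_add_mul_log_one_add {x : ℝ} (h0 : 0 ≤ x) (h1 : x ≤ 1) :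
    x + 0.38 * x ^ 2 ≤ (1 + x) * log (1 + x) := by
  have hx : 0 < 1 + x := by linarith
  set r := (x + 0.38 * x ^ 2) / (1 + x)
  have hr : r * (1 + x) = x + 0.38 * x ^ 2 := div_mul_cancel₀ _ hx.ne'
  have hr0 : 0 ≤ r := by positivity
  have hr1 : r ≤ 1 := by rw [div_le_one hx]; nlinarith
  have hlog : r ≤ log (1 + x) := (le_log_iff_exp_le hx).2 <|
    (exp_le_quartic (abs_le.2 ⟨by linarith, hr1⟩)).trans (quartic_le_one_add h0 h1 hr)
  rw [← hr, mul_comm]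
  gcongr

lemma mul_exp_div_sub_one_le_of_le {p q : ℝ} (hq : 0 < q) (hqp : q ≤ p) (t : ℝ) :
    p * (exp (t / p) - 1) ≤ q * (exp (t / q) - 1) := by
  have hp : 0 < p := hq.trans_le hqp
  -- `exp (t / p)` lies below the chord of `exp` between `0` and `t / q`
  have hconv := convexOn_exp.2 (Set.mem_univ (t / q)) (Set.mem_univ 0)
    (div_nonneg hq.le hp.le) (sub_nonneg.2 ((div_le_one hp).2 hqp)) (add_sub_cancel _ _)
  simp only [smul_eq_mul, mul_zero, add_zero, exp_zero, mul_one] at hconv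
  rw [show q / p * (t / q) = t / p by field_simp] at hconv
  calc p * (exp (t / p) - 1) ≤ p * (q / p * exp (t / q) + (1 - q / p) - 1) := by gcongr
    _ = q * (exp (t / q) - 1) := by field_simp; ring

lemma exp_mul_eq_indicator_add_one {Ω : Type*} {X : Ω → ℝ} {a : ℝ}
    (hX : ∀ ω, X ω = a ∨ X ω = 0) (t : ℝ) :
    (fun ω => exp (t * X ω)) =
      fun ω => {ω | X ω = a}.indicator (fun _ => exp (t * a) - 1) ω + 1 := by
  funext ω
  by_cases hω : X ω = a
  · simp [hω]
  · rw [Set.indicator_of_notMem (show ω ∉ {ω | X ω = a} from hω), (hX ω).resolve_left hω]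
    simp

section TwoPoint

variable {Ω : Type*} [MeasurableSpace Ω] {μ : Measure Ω} {X : Ω → ℝ} {a : ℝ}

lemma integrable_exp_mul_of_forall_eq_or_eq_zero [IsFiniteMeasure μ] (hXm : Measurable X)
    (hX : ∀ ω, X ω = a ∨ X ω = 0) (t : ℝ) : Integrable (fun ω => exp (t * X ω)) μ := by
  rw [exp_mul_eq_indicator_add_one hX]
  exact ((integrable_const _).indicator (hXm (measurableSet_singleton a))).add
    (integrable_const 1)

lemma mgf_of_forall_eq_or_eq_zero [IsProbabilityMeasure μ] (hXm : Measurable X)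
    (hX : ∀ ω, X ω = a ∨ X ω = 0) (t : ℝ) :
    mgf X μ t = 1 + μ.real {ω | X ω = a} * (exp (t * a) - 1) := by
  have hA : MeasurableSet {ω | X ω = a} := hXm (measurableSet_singleton a)
  rw [mgf, exp_mul_eq_indicator_add_one hX, integral_add ((integrable_const _).indicator hA)
    (integrable_const 1), integral_indicator_const _ hA]
  simp [add_comm]

lemma mgf_le_exp_mul_exp_div_sub_one [IsProbabilityMeasure μ] {p q : ℝ} (hXm : Measurable X)
    (hX : ∀ ω, X ω = 1 / p ∨ X ω = 0) (hprob : μ.real {ω | X ω = 1 / p} = p)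
    (hq : 0 < q) (hqp : q ≤ p) (t : ℝ) : mgf X μ t ≤ exp (q * (exp (t / q) - 1)) := by
  rw [mgf_of_forall_eq_or_eq_zero hXm hX, hprob, mul_one_div]
  calc 1 + p * (exp (t / p) - 1) ≤ exp (p * (exp (t / p) - 1)) := by
        linarith [add_one_le_exp (p * (exp (t / p) - 1))]
    _ ≤ exp (q * (exp (t / q) - 1)) := exp_le_exp.2 (mul_exp_div_sub_one_le_of_le hq hqp t)

end TwoPoint

lemma ProbabilityTheory.iIndepFun.mgf_sum_le_exp {Ω ι : Type*} [MeasurableSpace Ω]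
    {μ : Measure Ω} [Fintype ι] {X : ι → Ω → ℝ} (h_indep : iIndepFun X μ)
    (h_meas : ∀ i, Measurable (X i)) {t c : ℝ}
    (h : ∀ i, mgf (X i) μ t ≤ exp c) : mgf (∑ i, X i) μ t ≤ exp (Fintype.card ι * c) := by
  rw [h_indep.mgf_sum h_meas, exp_nat_mul]
  calc ∏ i, mgf (X i) μ t ≤ ∏ _i : ι, exp c :=
        Finset.prod_le_prod (fun _ _ => mgf_nonneg) fun i _ => h i
    _ = exp c ^ Fintype.card ι := by rw [Finset.prod_const, Finset.card_univ]

/-! The hypothesis `hmgf` below says that `q • S` is dominated in moment generating function by a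
Poisson variable of mean `m q`. -/

section PoissonTail

variable {Ω : Type*} [MeasurableSpace Ω] {μ : Measure Ω} [IsFiniteMeasure μ] {S : Ω → ℝ}
  {q m N ε : ℝ}

lemma measureReal_ge_le_of_mgf_le (hq : 0 < q) (hN : 0 ≤ N) (hmN : m ≤ N) (hε : 0 ≤ ε)
    (hε1 : ε ≤ 1) (hint : ∀ t, Integrable (fun ω => exp (t * S ω)) μ)
    (hmgf : ∀ t, mgf S μ t ≤ exp (m * (q * (exp (t / q) - 1)))) :
    μ.real {ω | m + ε * N ≤ S ω} ≤ exp (-(0.38 * ε ^ 2 * q * N)) := by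
  set L := log (1 + ε)
  have hL0 : 0 ≤ L := log_nonneg (by linarith)
  have hLε : L ≤ ε := by linarith [log_le_sub_one_of_pos (by linarith : (0 : ℝ) < 1 + ε)]
  have hmgfL : mgf S μ (q * L) ≤ exp (m * (q * ε)) := by
    simpa [mul_div_cancel_left₀ _ hq.ne', L, exp_log (by linarith : (0 : ℝ) < 1 + ε)]
      using hmgf (q * L)
  refine (measure_ge_le_exp_mul_mgf (t := q * L) _ (by positivity) (hint _)).trans ?_
  calc exp (-(q * L) * (m + ε * N)) * mgf S μ (q * L)
      ≤ exp (-(q * L) * (m + ε * N)) * exp (m * (q * ε)) := by gcongr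
    _ = exp (-(q * L) * (m + ε * N) + m * (q * ε)) := (exp_add _ _).symm
    _ ≤ exp (-(0.38 * ε ^ 2 * q * N)) := by
      refine exp_le_exp.2 ?_
      have h1 : 0 ≤ q * (N - m) * (ε - L) := by
        have := sub_nonneg.2 hmN; have := sub_nonneg.2 hLε; positivity
      have h2 := mul_le_mul_of_nonneg_left (add_mul_sq_le_one_add_mul_log_one_add hε hε1)
        (mul_nonneg hq.le hN)
      linarith

lemma measureReal_le_le_of_mgf_le (hq : 0 < q) (hN : 0 ≤ N) (hmN : m ≤ N) (hε : 0 ≤ ε)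
    (hint : ∀ t, Integrable (fun ω => exp (t * S ω)) μ)
    (hmgf : ∀ t, mgf S μ t ≤ exp (m * (q * (exp (t / q) - 1)))) :
    μ.real {ω | S ω ≤ m - ε * N} ≤ exp (-(ε ^ 2 * q * N / 2)) := by
  have hmgfε : mgf S μ (-(q * ε)) ≤ exp (m * (q * (exp (-ε) - 1))) := by
    simpa [neg_div, mul_div_cancel_left₀ _ hq.ne'] using hmgf (-(q * ε))
  refine (measure_le_le_exp_mul_mgf (t := -(q * ε)) _
    (neg_nonpos.2 (by positivity)) (hint _)).trans ?_
  calc exp (-(-(q * ε)) * (m - ε * N)) * mgf S μ (-(q * ε))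
      ≤ exp (-(-(q * ε)) * (m - ε * N)) * exp (m * (q * (exp (-ε) - 1))) := by gcongr
    _ = exp (-(-(q * ε)) * (m - ε * N) + m * (q * (exp (-ε) - 1))) := (exp_add _ _).symm
    _ ≤ exp (-(ε ^ 2 * q * N / 2)) := by
      refine exp_le_exp.2 ?_
      have hlow : 0 ≤ ε + exp (-ε) - 1 := by linarith [one_sub_le_exp_neg ε]
      have hup : ε + exp (-ε) - 1 ≤ ε ^ 2 / 2 := by linarith [exp_neg_le_quadratic hε]
      have h1 : 0 ≤ q * (N - m) * (ε + exp (-ε) - 1) := by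
        have := sub_nonneg.2 hmN; positivity
      have h2 := mul_le_mul_of_nonneg_left hup (mul_nonneg hq.le hN)
      linarith

lemma measureReal_lt_abs_sub_le_of_mgf_le (hq : 0 < q) (hN : 0 ≤ N) (hmN : m ≤ N)
    (hε : 0 ≤ ε) (hε1 : ε ≤ 1) (hint : ∀ t, Integrable (fun ω => exp (t * S ω)) μ)
    (hmgf : ∀ t, mgf S μ t ≤ exp (m * (q * (exp (t / q) - 1)))) :
    μ.real {ω | ε * N < |S ω - m|} ≤
      exp (-(0.38 * ε ^ 2 * q * N)) + exp (-(ε ^ 2 * q * N / 2)) := by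
  have hsub : {ω | ε * N < |S ω - m|} ⊆ {ω | m + ε * N ≤ S ω} ∪ {ω | S ω ≤ m - ε * N} := by
    intro ω hω
    rcases lt_abs.1 hω.out with h | h
    · exact Or.inl (show m + ε * N ≤ S ω by linarith)
    · exact Or.inr (show S ω ≤ m - ε * N by linarith)
  calc μ.real {ω | ε * N < |S ω - m|}
      ≤ μ.real {ω | m + ε * N ≤ S ω} + μ.real {ω | S ω ≤ m - ε * N} :=
        (measureReal_mono hsub).trans (measureReal_union_le _ _)
    _ ≤ _ := add_le_add (measureReal_ge_le_of_mgf_le hq hN hmN hε hε1 hint hmgf)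
        (measureReal_le_le_of_mgf_le hq hN hmN hε hint hmgf)

end PoissonTail

theorem stmt8_general (n : ℕ) (Ω : Type) [MeasurableSpace Ω] (μ : Measure Ω) [IsProbabilityMeasure μ]
    (p : Fin n → ℝ) (hp : ∀ i, 0 < p i ∧ p i ≤ 1)
    (X : Fin n → Ω → ℝ) (hmeas : ∀ i, Measurable (X i))
    (hval : ∀ i ω, X i ω = 1 / p i ∨ X i ω = 0)
    (hdist : ∀ i, μ {ω | X i ω = 1 / p i} = ENNReal.ofReal (p i))
    (hindep : iIndepFun X μ)
    (q : ℝ) (hq : 0 < q) (hqle : ∀ i, q ≤ p i)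
    (ε : ℝ) (hε : 0 < ε) (hε1 : ε < 1)
    (N : ℝ) (hN : (n : ℝ) ≤ N) :
    (μ {ω | ε * N < |(∑ i, X i ω) - n|}).toReal <
      2 * Real.exp (-(0.38 * ε ^ 2 * q * N)) := by
  have hN0 : 0 ≤ N := (Nat.cast_nonneg n).trans hN
  have hprob : ∀ i, μ.real {ω | X i ω = 1 / p i} = p i := fun i => by
    rw [measureReal_def, hdist i, ENNReal.toReal_ofReal (hp i).1.le]
  have hint : ∀ t, Integrable (fun ω => exp (t * (∑ i, X i) ω)) μ := fun t =>
    hindep.integrable_exp_mul_sum hmeas fun i _ =>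
      integrable_exp_mul_of_forall_eq_or_eq_zero (hmeas i) (hval i) t
  have hmgf : ∀ t, mgf (∑ i, X i) μ t ≤ exp (n * (q * (exp (t / q) - 1))) := fun t => by
    simpa using hindep.mgf_sum_le_exp hmeas fun i =>
      mgf_le_exp_mul_exp_div_sub_one (hmeas i) (hval i) (hprob i) hq (hqle i) t
  have htails := measureReal_lt_abs_sub_le_of_mgf_le hq hN0 hN hε.le hε1.le hint hmgf
  simp only [Finset.sum_apply] at htails
  rw [← measureReal_def]
  rcases hN0.eq_or_lt with rfl | hNpos
  · simpa using measureReal_le_one.trans_lt one_lt_two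
  · have hlower_lt : exp (-(ε ^ 2 * q * N / 2)) < exp (-(0.38 * ε ^ 2 * q * N)) := by
      have : 0 < ε ^ 2 * q * N := by positivity
      exact exp_lt_exp.2 (by linarith)
    linarith

/-- Chernoff-type bound of Fung et al.: if `Xᵢ` are independent, `Xᵢ = 1/pᵢ` with
probability `pᵢ` and `0` otherwise, `p ≤ pᵢ` for all `i`, `ε ∈ (0,1)` and `N ≥ n`,
then `Pr[|∑ Xᵢ − n| > εN] < 2 e^{−0.38 ε² p N}`. -/
theorem stmt8 (n : ℕ) (Ω : Type) [MeasurableSpace Ω] (μ : Measure Ω) [IsProbabilityMeasure μ]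
    (p : Fin n → ℝ) (hp : ∀ i, 0 < p i ∧ p i ≤ 1)
    (X : Fin n → Ω → ℝ) (hmeas : ∀ i, Measurable (X i))
    (hval : ∀ i ω, X i ω = 1 / p i ∨ X i ω = 0)
    (hdist : ∀ i, μ {ω | X i ω = 1 / p i} = ENNReal.ofReal (p i))
    (hindep : iIndepFun X μ)
    (q : ℝ) (hq : 0 < q) (hq1 : q ≤ 1) (hqle : ∀ i, q ≤ p i)
    (ε : ℝ) (hε : 0 < ε) (hε1 : ε < 1)
    (N : ℝ) (hN : (n : ℝ) ≤ N) :
    (μ {ω | ε * N < |(∑ i, X i ω) - n|}).toReal <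
      2 * Real.exp (-(0.38 * ε ^ 2 * q * N)) :=
  stmt8_general n Ω μ p hp X hmeas hval hdist hindep q hq hqle ε hε hε1 N hN
end

section
/- Let G = (V, E) be an undirected unweighted graph on n vertices whose minimum cut has value k > 0 (i.e., G is k-connected and some cut has value exactly k). Then for every real α ≥ 1, the number of cuts of G having value at most αk is at most n^{2α}, where cuts are identified with unordered partitions {S, V∖S} for ∅ ≠ S ≠ V. -/
open Finset

variable {V : Type} [Fintype V] [DecidableEq V]

/-!
Karger's contraction argument, made deterministic by averaging. Work with symmetric edge weights
`w`, so that contracting an edge stays in the class. Let `𝒮` be the sets whose cut has weight at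
most `αk`, and `M = ∑ₓ deg x ≥ nk`. Each `S ∈ 𝒮` leaves weight at least `M - 2αk` on the ordered
pairs of vertices it does not separate, while for fixed `u ≠ v` the members of `𝒮` not separating
`u` and `v` are cuts of the graph with `u` and `v` merged, which is again `k`-connected and has
`n - 1` vertices. Double counting gives `|𝒮| ≤ n / (n - 2α) · (bound for n - 1)` once
`n > 2α + 1`; below that the trivial bound `2ⁿ` is used. The resulting product is at most
`n^(2α)`: with `s = ⌊2α⌋`, it is dominated by the log-linear interpolation between the falling
factorials `n^(s)` and `n^(s+1)`, by weighted AM-GM at each step. Finally every cut `{S, Sᶜ}` is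
counted twice in `𝒮`.
-/

namespace Karger

section Cut

variable {V : Type*} [Fintype V] [DecidableEq V]

def cutWeight (w : V → V → ℕ) (S : Finset V) : ℕ :=
  ∑ u ∈ S, ∑ v ∈ Sᶜ, w u v

noncomputable def cutsBelow (w : V → V → ℕ) (t : ℝ) : Finset (Finset V) :=
  {S | S.Nonempty ∧ S ≠ univ ∧ (cutWeight w S : ℝ) ≤ t}

lemma cutWeight_compl {w : V → V → ℕ} (hw : ∀ x y, w x y = w y x) (S : Finset V) :
    cutWeight w Sᶜ = cutWeight w S := by
  rw [cutWeight, cutWeight, compl_compl, sum_comm]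
  exact sum_congr rfl fun x _ => sum_congr rfl fun y _ => hw y x

lemma compl_mem_cutsBelow {w : V → V → ℕ} (hw : ∀ x y, w x y = w y x) {t : ℝ}
    {S : Finset V} (hS : S ∈ cutsBelow w t) : Sᶜ ∈ cutsBelow w t := by
  simp only [cutsBelow, mem_filter, mem_univ, true_and] at hS ⊢
  obtain ⟨hne, hnu, hcut⟩ := hS
  refine ⟨?_, ?_, by rwa [cutWeight_compl hw]⟩
  · rwa [← compl_ne_univ_iff_nonempty, compl_compl]
  · rwa [compl_ne_univ_iff_nonempty]

end Cut

section Contraction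

variable {V W : Type*} [Fintype V] [DecidableEq W]

def mapWeight (π : V → W) (w : V → V → ℕ) (a b : W) : ℕ :=
  ∑ x with π x = a, ∑ y with π y = b, w x y

lemma mapWeight_symm {w : V → V → ℕ} (hw : ∀ x y, w x y = w y x) (π : V → W) (a b : W) :
    mapWeight π w a b = mapWeight π w b a := by
  rw [mapWeight, mapWeight, sum_comm]
  exact sum_congr rfl fun x _ => sum_congr rfl fun y _ => hw y x

variable [DecidableEq V] [Fintype W]

lemma cutWeight_mapWeight (π : V → W) (w : V → V → ℕ) (T : Finset W) :
    cutWeight (mapWeight π w) T = cutWeight w {x | π x ∈ T} := by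
  calc cutWeight (mapWeight π w) T
      = ∑ a ∈ T, ∑ x with π x = a, ∑ b ∈ Tᶜ, ∑ y with π y = b, w x y := by
        simp only [cutWeight, mapWeight, sum_comm (s := Tᶜ)]
    _ = ∑ x with π x ∈ T, ∑ y with π y ∈ Tᶜ, w x y := by
        simp only [sum_fiberwise_eq_sum_filter]
    _ = cutWeight w {x | π x ∈ T} := by simp only [cutWeight, compl_filter, mem_compl]

lemma le_cutWeight_mapWeight {π : V → W} (hπ : Function.Surjective π) {w : V → V → ℕ} {k : ℕ}
    (hconn : ∀ S : Finset V, S.Nonempty → S ≠ univ → k ≤ cutWeight w S)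
    (T : Finset W) (hne : T.Nonempty) (hnu : T ≠ univ) : k ≤ cutWeight (mapWeight π w) T := by
  rw [cutWeight_mapWeight]
  apply hconn
  · obtain ⟨a, ha⟩ := hne
    obtain ⟨x, rfl⟩ := hπ a
    exact ⟨x, by simpa using ha⟩
  · refine fun h => hnu (eq_univ_iff_forall.mpr fun a => ?_)
    obtain ⟨x, rfl⟩ := hπ a
    simpa using eq_univ_iff_forall.mp h x

lemma card_filter_saturated_cutsBelow_le (π : V → W) (w : V → V → ℕ) (t : ℝ) :
    #{S ∈ cutsBelow w t | ∀ x y, π x = π y → (x ∈ S ↔ y ∈ S)} ≤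
      #(cutsBelow (mapWeight π w) t) := by
  refine le_trans (card_le_card (t := (cutsBelow (mapWeight π w) t).image
    fun T => ({x | π x ∈ T} : Finset V)) ?_) card_image_le
  intro S hS
  simp only [mem_filter, cutsBelow, mem_univ, true_and] at hS
  obtain ⟨⟨hne, hnu, hcut⟩, hsat⟩ := hS
  have hS : ({x | π x ∈ S.image π} : Finset V) = S := by
    ext x
    simp only [mem_filter, mem_univ, true_and, mem_image]
    exact ⟨fun ⟨y, hy, hyx⟩ => (hsat y x hyx).mp hy, fun hx => ⟨x, hx, rfl⟩⟩
  refine mem_image.mpr ⟨S.image π, ?_, hS⟩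
  simp only [cutsBelow, mem_filter, mem_univ, true_and, cutWeight_mapWeight, hS]
  refine ⟨hne.image π, fun h => hnu ?_, hcut⟩
  rw [← hS, h]
  simp

end Contraction

section Merge

variable {V : Type*} [DecidableEq V]

/-- `mapWeight (mergeInto huv) w` is `w` with the edge `uv` contracted. -/
def mergeInto {u v : V} (huv : u ≠ v) (x : V) : {x : V // x ≠ v} :=
  if h : x = v then ⟨u, huv⟩ else ⟨x, h⟩

lemma mergeInto_surjective {u v : V} (huv : u ≠ v) : Function.Surjective (mergeInto huv) :=
  fun a => ⟨a, dif_neg a.2⟩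

lemma mem_iff_of_mergeInto_eq {u v : V} (huv : u ≠ v) {S : Finset V} (hS : u ∈ S ↔ v ∈ S)
    {x y : V} (h : mergeInto huv x = mergeInto huv y) : x ∈ S ↔ y ∈ S := by
  unfold mergeInto at h
  split_ifs at h with hx hy hy <;> simp only [Subtype.mk.injEq] at h <;> subst_vars <;> tauto

lemma card_filter_cutsBelow_le_mergeInto [Fintype V] {u v : V} (huv : u ≠ v) (w : V → V → ℕ)
    (t : ℝ) :
    #{S ∈ cutsBelow w t | u ∈ S ↔ v ∈ S} ≤ #(cutsBelow (mapWeight (mergeInto huv) w) t) :=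
  (card_le_card (monotone_filter_right _ fun _ _ hS _ _ => mem_iff_of_mergeInto_eq huv hS)).trans
    (card_filter_saturated_cutsBelow_le _ _ _)

end Merge

section Averaging

variable {V : Type*} [Fintype V] [DecidableEq V] {w : V → V → ℕ}

lemma sum_ite_mem_iff_add_two_mul_cutWeight (hw : ∀ x y, w x y = w y x) (S : Finset V) :
    ∑ x, ∑ y ∈ {x}ᶜ, (if (x ∈ S ↔ y ∈ S) then w x y else 0) + 2 * cutWeight w S =
      ∑ x, cutWeight w {x} := by
  have hside (x : V) : ∑ y, (if (x ∈ S ↔ y ∈ S) then 0 else w x y) =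
      if x ∈ S then ∑ y ∈ Sᶜ, w x y else ∑ y ∈ S, w x y := by
    split_ifs with hx <;> simp [hx, sum_ite, filter_not, compl_eq_univ_sdiff]
  have hsep : ∑ x, ∑ y ∈ {x}ᶜ, (if (x ∈ S ↔ y ∈ S) then 0 else w x y) = 2 * cutWeight w S := by
    calc _ = ∑ x, ∑ y, (if (x ∈ S ↔ y ∈ S) then 0 else w x y) := by
          refine sum_congr rfl fun x _ => ?_
          rw [compl_singleton, sum_erase]
          simp
      _ = cutWeight w S + cutWeight w Sᶜ := by
          simp only [hside, sum_ite, filter_mem_eq_inter, univ_inter, cutWeight, compl_compl,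
            filter_not, ← compl_eq_univ_sdiff]
      _ = 2 * cutWeight w S := by rw [cutWeight_compl hw, two_mul]
  rw [← hsep, ← sum_add_distrib]
  refine sum_congr rfl fun x _ => ?_
  rw [cutWeight, sum_singleton, ← sum_add_distrib]
  exact sum_congr rfl fun y _ => by split_ifs <;> simp

lemma card_mul_sub_le (hw : ∀ x y, w x y = w y x) {𝒮 : Finset (Finset V)} {t B : ℝ}
    (hcut : ∀ S ∈ 𝒮, (cutWeight w S : ℝ) ≤ t)
    (hB : ∀ x y, x ≠ y → (#{S ∈ 𝒮 | x ∈ S ↔ y ∈ S} : ℝ) ≤ B) :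
    (#𝒮 : ℝ) * ((∑ x, cutWeight w {x} : ℕ) - 2 * t) ≤ (∑ x, cutWeight w {x} : ℕ) * B := by
  set M := ∑ x, cutWeight w {x}
  have hrow (S : Finset V) (hS : S ∈ 𝒮) : (M : ℝ) - 2 * t ≤
      ∑ x, ∑ y ∈ {x}ᶜ, ((if (x ∈ S ↔ y ∈ S) then w x y else 0 : ℕ) : ℝ) := by
    have h : (M : ℝ) = ((∑ x, ∑ y ∈ {x}ᶜ, if (x ∈ S ↔ y ∈ S) then w x y else 0 : ℕ) : ℝ) +
        2 * cutWeight w S := by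
      exact_mod_cast (sum_ite_mem_iff_add_two_mul_cutWeight hw S).symm
    simp only [Nat.cast_sum] at h
    linarith [hcut S hS]
  have hswap : ∑ S ∈ 𝒮, ∑ x, ∑ y ∈ {x}ᶜ, ((if (x ∈ S ↔ y ∈ S) then w x y else 0 : ℕ) : ℝ) =
      ∑ x, ∑ y ∈ {x}ᶜ, (w x y : ℝ) * #{S ∈ 𝒮 | x ∈ S ↔ y ∈ S} := by
    rw [sum_comm]
    refine sum_congr rfl fun x _ => ?_
    rw [sum_comm]
    refine sum_congr rfl fun y _ => ?_
    simp only [card_filter, Nat.cast_sum, mul_sum]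
    exact sum_congr rfl fun S _ => by split_ifs <;> simp
  calc (#𝒮 : ℝ) * (M - 2 * t)
      ≤ ∑ S ∈ 𝒮, ∑ x, ∑ y ∈ {x}ᶜ, ((if (x ∈ S ↔ y ∈ S) then w x y else 0 : ℕ) : ℝ) := by
        rw [← nsmul_eq_mul, ← sum_const]
        exact sum_le_sum hrow
    _ ≤ ∑ x, ∑ y ∈ {x}ᶜ, (w x y : ℝ) * B := by
        rw [hswap]
        refine sum_le_sum fun x _ => sum_le_sum fun y hy => ?_
        exact mul_le_mul_of_nonneg_left (hB x y (by simpa [eq_comm] using hy)) (by positivity)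
    _ = M * B := by
        simp only [M, cutWeight, sum_singleton, Nat.cast_sum, sum_mul]

end Averaging

section Bound

open Real

lemma div_le_div_rpow_mul_div_rpow {a b c θ : ℝ} (ha : 0 < a) (hb : 0 < b) (hc : 0 ≤ c)
    (hθ₀ : 0 ≤ θ) (hθ₁ : θ ≤ 1) :
    c / (θ * a + (1 - θ) * b) ≤ (c / a) ^ θ * (c / b) ^ (1 - θ) := by
  rw [div_rpow hc ha.le, div_rpow hc hb.le, div_mul_div_comm, ← rpow_add' hc (by norm_num),
    add_sub_cancel, rpow_one]
  exact div_le_div_of_nonneg_left hc (by positivity)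
    (geom_mean_le_arith_mean2_weighted hθ₀ (sub_nonneg.2 hθ₁) ha.le hb.le (by ring))

/-- Stands in for the falling factorial `p^(s+1-θ)` of non-integral order. -/
noncomputable def descFactorialInterp (s : ℕ) (θ : ℝ) (p : ℕ) : ℝ :=
  (p.descFactorial s : ℝ) ^ θ * (p.descFactorial (s + 1) : ℝ) ^ (1 - θ)

lemma descFactorialInterp_le_rpow {s p : ℕ} {θ : ℝ} (hp : 0 < p) (hθ₀ : 0 ≤ θ) (hθ₁ : θ ≤ 1) :
    descFactorialInterp s θ p ≤ (p : ℝ) ^ (s + 1 - θ) := by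
  have hp' : (0 : ℝ) < p := by exact_mod_cast hp
  calc descFactorialInterp s θ p ≤ ((p : ℝ) ^ s) ^ θ * ((p : ℝ) ^ (s + 1)) ^ (1 - θ) := by
        unfold descFactorialInterp
        gcongr <;> exact_mod_cast p.descFactorial_le_pow _
    _ = (p : ℝ) ^ (s + 1 - θ) := by
        rw [← rpow_natCast, ← rpow_natCast, ← rpow_mul hp'.le, ← rpow_mul hp'.le, ← rpow_add hp']
        push_cast
        ring_nf

lemma cast_descFactorial_succ {q s : ℕ} (hs : s ≤ q) :
    ((q + 1).descFactorial s : ℝ) = (q + 1) / (q + 1 - s) * q.descFactorial s := by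
  have hpos : (0 : ℝ) < q + 1 - s := by
    have : (s : ℝ) ≤ q := by exact_mod_cast hs
    linarith
  have h := congrArg (Nat.cast (R := ℝ)) (Nat.succ_descFactorial q s)
  push_cast [Nat.cast_sub (show s ≤ q + 1 by omega)] at h
  field_simp
  linarith

lemma div_mul_descFactorialInterp_le {s q : ℕ} {θ : ℝ} (hsq : s + 1 ≤ q) (hθ₀ : 0 ≤ θ)
    (hθ₁ : θ ≤ 1) :
    (q + 1) / (q + 1 - (s + 1 - θ)) * descFactorialInterp s θ q ≤
      descFactorialInterp s θ (q + 1) := by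
  have hq : (s : ℝ) + 1 ≤ q := by exact_mod_cast hsq
  have ha : (0 : ℝ) < q + 1 - s := by linarith
  have hb : (0 : ℝ) < q + 1 - (s + 1 : ℕ) := by push_cast; linarith
  have hstep := div_le_div_rpow_mul_div_rpow ha hb (by positivity : (0 : ℝ) ≤ q + 1) hθ₀ hθ₁
  rw [show θ * ((q : ℝ) + 1 - s) + (1 - θ) * ((q : ℝ) + 1 - (s + 1 : ℕ)) =
    (q + 1) - (s + 1 - θ) by push_cast; ring] at hstep
  calc (q + 1) / (q + 1 - (s + 1 - θ)) * descFactorialInterp s θ q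
      ≤ (((q : ℝ) + 1) / (q + 1 - s)) ^ θ * (((q : ℝ) + 1) / (q + 1 - (s + 1 : ℕ))) ^ (1 - θ) *
          descFactorialInterp s θ q := by
        gcongr
        unfold descFactorialInterp
        positivity
    _ = descFactorialInterp s θ (q + 1) := by
        rw [descFactorialInterp, descFactorialInterp, Nat.cast_add_one,
          cast_descFactorial_succ (by omega), cast_descFactorial_succ hsq,
          mul_rpow (by positivity) (by positivity), mul_rpow (by positivity) (by positivity)]
        push_cast
        ring

noncomputable def cutCountBound (α : ℝ) : ℕ → ℝ
  | 0 => 1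
  | n + 1 =>
    if (n + 1 : ℝ) ≤ 2 * α + 1 then 2 ^ n else (n + 1) / (n + 1 - 2 * α) * cutCountBound α n

lemma cutCountBound_succ_of_le {α : ℝ} {n : ℕ} (hn : (n + 1 : ℝ) ≤ 2 * α + 1) :
    cutCountBound α (n + 1) = 2 ^ n := by
  rw [cutCountBound, if_pos hn]

lemma cutCountBound_succ_of_lt {α : ℝ} {n : ℕ} (hn : 2 * α + 1 < n + 1) :
    cutCountBound α (n + 1) = (n + 1) / (n + 1 - 2 * α) * cutCountBound α n := by
  rw [cutCountBound, if_neg hn.not_ge]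

lemma cutCountBound_nonneg (α : ℝ) : ∀ n, 0 ≤ cutCountBound α n
  | 0 => zero_le_one
  | n + 1 => by
    rcases le_or_gt ((n + 1 : ℝ)) (2 * α + 1) with hn | hn
    · rw [cutCountBound_succ_of_le hn]
      positivity
    · rw [cutCountBound_succ_of_lt hn]
      have := cutCountBound_nonneg α n
      have : (0 : ℝ) < n + 1 - 2 * α := by linarith
      positivity

lemma cutCountBound_le_descFactorialInterp {α : ℝ} (hα : 0 ≤ α) {p : ℕ}
    (hp : ⌊2 * α⌋₊ + 1 ≤ p) :
    cutCountBound α p ≤ descFactorialInterp ⌊2 * α⌋₊ (⌊2 * α⌋₊ + 1 - 2 * α) p := by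
  set s := ⌊2 * α⌋₊
  have hs : (s : ℝ) ≤ 2 * α := Nat.floor_le (by positivity)
  have hs' : 2 * α < s + 1 := Nat.lt_floor_add_one _
  induction p, hp using Nat.le_induction with
  | base =>
    have hfac : (2 : ℝ) ^ s ≤ (s + 1).factorial := by
      have := @Nat.factorial_mul_pow_le_factorial 1 s
      norm_num [add_comm 1 s] at this
      exact_mod_cast this
    rw [cutCountBound_succ_of_le (by linarith), descFactorialInterp, Nat.descFactorial_self,
      show (s + 1).descFactorial s = (s + 1).factorial by
        rw [← Nat.descFactorial_self, Nat.descFactorial_succ, Nat.add_sub_cancel_left, one_mul],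
      ← rpow_add' (by positivity) (by norm_num), add_sub_cancel, rpow_one]
    exact hfac
  | succ q hq ih =>
    have hq' : (s : ℝ) + 1 ≤ q := by exact_mod_cast hq
    rw [cutCountBound_succ_of_lt (by linarith)]
    calc ((q : ℝ) + 1) / (q + 1 - 2 * α) * cutCountBound α q
        ≤ (q + 1) / (q + 1 - (s + 1 - (s + 1 - 2 * α))) *
            descFactorialInterp s (s + 1 - 2 * α) q := by
          rw [sub_sub_cancel]
          have : (0 : ℝ) < q + 1 - 2 * α := by linarith
          gcongr
      _ ≤ descFactorialInterp s (s + 1 - 2 * α) (q + 1) :=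
          div_mul_descFactorialInterp_le hq (by linarith) (by linarith)

lemma cutCountBound_le_rpow {α : ℝ} (hα : 0 ≤ α) {n : ℕ} (hn : 0 < n) :
    cutCountBound α n ≤ (n : ℝ) ^ (2 * α) := by
  have hn' : (1 : ℝ) ≤ n := by exact_mod_cast hn
  rcases le_or_gt ((n : ℝ)) (2 * α + 1) with hsmall | hlarge
  · obtain ⟨m, rfl⟩ : ∃ m, n = m + 1 := ⟨n - 1, by omega⟩
    push_cast at hsmall hn' ⊢
    rw [cutCountBound_succ_of_le hsmall]
    calc (2 : ℝ) ^ m ≤ ((m : ℝ) + 1) ^ m := by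
          rcases Nat.eq_zero_or_pos m with rfl | hm
          · simp
          · gcongr
            have : (1 : ℝ) ≤ m := by exact_mod_cast hm
            linarith
      _ = ((m : ℝ) + 1) ^ (m : ℝ) := (rpow_natCast _ _).symm
      _ ≤ ((m : ℝ) + 1) ^ (2 * α) := rpow_le_rpow_of_exponent_le hn' (by linarith)
  · set s := ⌊2 * α⌋₊
    have hs : (s : ℝ) ≤ 2 * α := Nat.floor_le (by positivity)
    have hs' : 2 * α < s + 1 := Nat.lt_floor_add_one _
    have hsn : s + 1 ≤ n := by
      have : (s : ℝ) + 1 < n := by linarith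
      exact_mod_cast this.le
    calc cutCountBound α n ≤ descFactorialInterp s (s + 1 - 2 * α) n :=
          cutCountBound_le_descFactorialInterp hα hsn
      _ ≤ (n : ℝ) ^ (s + 1 - (s + 1 - 2 * α)) :=
          descFactorialInterp_le_rpow hn (by linarith) (by linarith)
      _ = (n : ℝ) ^ (2 * α) := by rw [sub_sub_cancel]

end Bound

lemma card_mul_le_sum_cutWeight_singleton {V : Type*} [Fintype V] [DecidableEq V]
    [Nontrivial V] {w : V → V → ℕ} {k : ℕ}
    (hconn : ∀ S : Finset V, S.Nonempty → S ≠ univ → k ≤ cutWeight w S) :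
    Fintype.card V * k ≤ ∑ x, cutWeight w {x} := by
  have := card_nsmul_le_sum univ _ k fun x _ =>
    hconn {x} (singleton_nonempty x) (singleton_ne_univ x)
  rwa [card_univ, smul_eq_mul] at this

lemma le_div_mul_of_mul_sub_le {X M B n k α : ℝ} (hα : 0 ≤ α) (hk : 0 < k) (hn : 2 * α < n)
    (hB : 0 ≤ B) (hM : n * k ≤ M) (h : X * (M - 2 * (α * k)) ≤ M * B) :
    X ≤ n / (n - 2 * α) * B := by
  have hgap : 0 < M - 2 * (α * k) := by nlinarith
  -- `M ↦ M / (M - 2αk)` is decreasing, so `M` may be replaced by its lower bound `nk`.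
  have hX : X * (n - 2 * α) ≤ n * B := by
    refine le_of_mul_le_mul_right ?_ hgap
    nlinarith [mul_le_mul_of_nonneg_right h (by linarith : 0 ≤ n - 2 * α),
      mul_le_mul_of_nonneg_right hM (by positivity : 0 ≤ 2 * α * B)]
  rwa [div_mul_eq_mul_div, le_div_iff₀ (by linarith)]

theorem card_cutsBelow_le {α : ℝ} (hα : 0 ≤ α) {k : ℕ} (hk : 0 < k) {V : Type*} [Fintype V]
    [DecidableEq V] {w : V → V → ℕ} (hw : ∀ x y, w x y = w y x)
    (hconn : ∀ S : Finset V, S.Nonempty → S ≠ univ → k ≤ cutWeight w S) :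
    (#(cutsBelow w (α * k)) : ℝ) ≤ 2 * cutCountBound α (Fintype.card V) := by
  induction hn : Fintype.card V using Nat.strong_induction_on generalizing V with
  | _ n ih =>
  rcases le_or_gt (n : ℝ) (2 * α + 1) with hsmall | hlarge
  · have hall : (#(cutsBelow w (α * k)) : ℝ) ≤ 2 ^ n := by
      have := card_le_univ (cutsBelow w (α * k))
      rw [Fintype.card_finset, hn] at this
      exact_mod_cast this
    refine hall.trans ?_
    rcases n with _ | m
    · norm_num [cutCountBound]
    · rw [cutCountBound_succ_of_le (by exact_mod_cast hsmall), pow_succ, mul_comm]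
  have hn₁ : 1 < n := by exact_mod_cast (by linarith : (1 : ℝ) < n)
  have : Nontrivial V := Fintype.one_lt_card_iff_nontrivial.mp (hn ▸ hn₁)
  obtain ⟨m, rfl⟩ : ∃ m, n = m + 1 := ⟨n - 1, by omega⟩
  push_cast at hlarge
  have hcol (u v : V) (huv : u ≠ v) :
      (#{S ∈ cutsBelow w (α * k) | u ∈ S ↔ v ∈ S} : ℝ) ≤ 2 * cutCountBound α m :=
    (Nat.cast_le.mpr (card_filter_cutsBelow_le_mergeInto huv w _)).trans <|
      ih m (by omega) (mapWeight_symm hw _)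
        (le_cutWeight_mapWeight (mergeInto_surjective huv) hconn) (by simp [hn])
  have hcount := card_mul_sub_le hw (t := α * k)
    (fun S hS => by simp only [cutsBelow, mem_filter] at hS; exact hS.2.2.2) hcol
  have hdeg : ((m + 1) * k : ℝ) ≤ (∑ x, cutWeight w {x} : ℕ) := by
    exact_mod_cast hn ▸ card_mul_le_sum_cutWeight_singleton hconn
  rw [cutCountBound_succ_of_lt (by linarith), mul_left_comm]
  exact le_div_mul_of_mul_sub_le hα (by exact_mod_cast hk) (by linarith)
    (by linarith [cutCountBound_nonneg α m]) hdeg hcount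

lemma two_mul_card_image_pair_compl_le {V : Type*} [Fintype V] [DecidableEq V] [Nonempty V]
    {𝒮 : Finset (Finset V)} (h𝒮 : ∀ S ∈ 𝒮, Sᶜ ∈ 𝒮) :
    2 * #(𝒮.image fun S => ({S, Sᶜ} : Finset (Finset V))) ≤ #𝒮 := by
  refine mul_card_image_le_card _ _ fun P hP => ?_
  obtain ⟨S, hS, rfl⟩ := mem_image.mp hP
  exact one_lt_card.mpr ⟨S, by simp [hS], Sᶜ, by simp [h𝒮 S hS, pair_comm], ne_compl_self⟩

theorem card_image_pair_compl_cutsBelow_le {α : ℝ} (hα : 0 ≤ α) {k : ℕ} (hk : 0 < k)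
    {V : Type*} [Fintype V] [DecidableEq V] {w : V → V → ℕ} (hw : ∀ x y, w x y = w y x)
    (hconn : ∀ S : Finset V, S.Nonempty → S ≠ univ → k ≤ cutWeight w S) :
    (#((cutsBelow w (α * k)).image fun S => ({S, Sᶜ} : Finset (Finset V))) : ℝ) ≤
      (Fintype.card V : ℝ) ^ (2 * α) := by
  rcases isEmpty_or_nonempty V with hV | hV
  · simp [cutsBelow, not_nonempty_iff_eq_empty.mpr (Subsingleton.elim _ ∅)]
    positivity
  have hpair : (2 * #((cutsBelow w (α * k)).image fun S => ({S, Sᶜ} : Finset (Finset V))) : ℝ) ≤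
      #(cutsBelow w (α * k)) := by
    exact_mod_cast two_mul_card_image_pair_compl_le fun S => compl_mem_cutsBelow hw
  linarith [card_cutsBelow_le hα hk hw hconn, cutCountBound_le_rpow hα (Fintype.card_pos (α := V))]

end Karger

open Karger

theorem stmt12_general (V : Type) [Fintype V] [DecidableEq V] (G : SimpleGraph V) [DecidableRel G.Adj]
    (k : ℕ) (hk : 0 < k)
    (hconn : ∀ S : Finset V, S.Nonempty → S ≠ Finset.univ → k ≤ cutValN G S)
    (α : ℝ) (hα : 1 ≤ α) :
    (((Finset.univ.filter (fun S : Finset V =>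
          S.Nonempty ∧ S ≠ Finset.univ ∧ (cutValN G S : ℝ) ≤ α * k)).image
        (fun S => ({S, Sᶜ} : Finset (Finset V)))).card : ℝ) ≤
      (Fintype.card V : ℝ) ^ (2 * α) :=
  card_image_pair_compl_cutsBelow_le (w := G.adjMatrix ℕ) (by linarith) hk
    (fun x y => by simp [G.adj_comm]) hconn

/-- Karger's cut-counting bound: if the minimum cut of a graph `G` on `n`
vertices has value `k > 0`, then for every `α ≥ 1` the number of cuts
(identified with unordered partitions `{S, V \ S}`) of value at most `αk` is at
most `n^{2α}`. -/
theorem stmt12 (V : Type) [Fintype V] [DecidableEq V] (G : SimpleGraph V) [DecidableRel G.Adj]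
    (k : ℕ) (hk : 0 < k)
    (hconn : ∀ S : Finset V, S.Nonempty → S ≠ Finset.univ → k ≤ cutValN G S)
    (hmin : ∃ S : Finset V, S.Nonempty ∧ S ≠ Finset.univ ∧ cutValN G S = k)
    (α : ℝ) (hα : 1 ≤ α) :
    (((Finset.univ.filter (fun S : Finset V =>
          S.Nonempty ∧ S ≠ Finset.univ ∧ (cutValN G S : ℝ) ≤ α * k)).image
        (fun S => ({S, Sᶜ} : Finset (Finset V)))).card : ℝ) ≤
      (Fintype.card V : ℝ) ^ (2 * α) :=
  stmt12_general V G k hk hconn α hα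
end
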